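/- arXiv:2010.08064 — 8 statements merged into one kernel-verified Lean document; each statement's English description precedes it below -/
import Mathlib

section
/- Let (X,d) be a metric space and let ψ be a (ρ₋,ρ₊,C)-coarse near-action of a group G on X. Let x₀ ∈ X and suppose R > 0 is such that any two points of X are joined by a finite chain of points with consecutive distances ≤ R, and such that the orbit {ψ(γ)(x₀) : γ ∈ G} is R-dense in X (every point of X lies within distance R of some ψ(γ)(x₀)). Then the set S = {γ ∈ G : d(ψ(γ)(x₀), x₀) ≤ ρ₊(3R) + 3C} generates G. If moreover ψ is proper, then S is finite, so G is finitely generated. -/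
open Metric Filter

/-- Nondecreasing control functions `[0,∞) → [0,∞)` with `ρ₋(r) → ∞` as `r → ∞`. -/
def ControlFns (rm rp : ℝ → ℝ) : Prop :=
  MonotoneOn rm (Set.Ici 0) ∧ MonotoneOn rp (Set.Ici 0) ∧
  (∀ r, 0 ≤ r → 0 ≤ rm r) ∧ (∀ r, 0 ≤ r → 0 ≤ rp r) ∧
  Tendsto rm atTop atTop

/-- `f` is a `(ρ₋,ρ₊)`-coarse embedding. -/
def IsCoarseEmbeddingWith {X Y : Type*} [MetricSpace X] [MetricSpace Y]
    (rm rp : ℝ → ℝ) (f : X → Y) : Prop :=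
  ∀ x₁ x₂ : X, rm (dist x₁ x₂) ≤ dist (f x₁) (f x₂) ∧
    dist (f x₁) (f x₂) ≤ rp (dist x₁ x₂)

/-- A `C`-near-action of a group `G` on a metric space `X`. -/
def IsCNearAction {G X : Type*} [Group G] [MetricSpace X] (C : ℝ) (ψ : G → X → X) : Prop :=
  (∀ x : X, dist (ψ 1 x) x ≤ C) ∧
  ∀ (γ₁ γ₂ : G) (x : X), dist (ψ (γ₁ * γ₂) x) (ψ γ₁ (ψ γ₂ x)) ≤ C

/-- A `(ρ₋,ρ₊,C)`-coarse near-action: a `C`-near-action in which every `ψ γ` is a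
`(ρ₋,ρ₊)`-coarse embedding. -/
def IsCoarseNearAction {G X : Type*} [Group G] [MetricSpace X]
    (rm rp : ℝ → ℝ) (C : ℝ) (ψ : G → X → X) : Prop :=
  ControlFns rm rp ∧ 0 ≤ C ∧ IsCNearAction C ψ ∧
    ∀ γ : G, IsCoarseEmbeddingWith rm rp (ψ γ)

/-- The near-action `ψ` is proper. -/
def IsProperNearAction {G X : Type*} [Group G] [MetricSpace X] (ψ : G → X → X) : Prop :=
  ∀ R : ℝ, 0 < R → ∃ M : ℕ, ∀ x y : X,
    {γ : G | ∃ z ∈ closedBall x R, ψ γ z ∈ closedBall y R}.encard ≤ (M : ℕ∞)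

/-!
Proof idea: write `f γ = ψ(γ)(x₀)`. If `d(f γ₁, f γ₂) ≤ 3R`, then `ψ(γ₁⁻¹)` moves this pair to
within `ρ₊(3R)` of each other, and the near-action axioms put `ψ(γ₁⁻¹)(f γ₂)` within `C` of
`f (γ₁⁻¹ γ₂)` and `ψ(γ₁⁻¹)(f γ₁)` within `2C` of `x₀`; hence `γ₁⁻¹ γ₂ ∈ S`. Now follow an
`R`-chain from `f 1` to any point and pick, for each point of the chain, an orbit point within
`R` of it: consecutive orbit points are `3R`-close, so each step multiplies by an element of
`S`. Properness bounds the number of `γ` moving `x₀` a bounded distance, so `S` is finite.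
-/

theorem IsCoarseEmbeddingWith.dist_le_of_dist_le {X Y : Type*} [MetricSpace X] [MetricSpace Y]
    {rm rp : ℝ → ℝ} {f : X → Y} (hf : IsCoarseEmbeddingWith rm rp f)
    (hrp : MonotoneOn rp (Set.Ici 0)) {a b : X} {r : ℝ} (h : dist a b ≤ r) :
    dist (f a) (f b) ≤ rp r :=
  (hf a b).2.trans (hrp dist_nonneg (dist_nonneg.trans h) h)

theorem IsCoarseNearAction.dist_inv_mul_smul_le {G X : Type*} [Group G] [MetricSpace X]
    {rm rp : ℝ → ℝ} {C : ℝ} {ψ : G → X → X} (hψ : IsCoarseNearAction rm rp C ψ)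
    {γ₁ γ₂ : G} {x : X} {r : ℝ} (h : dist (ψ γ₂ x) (ψ γ₁ x) ≤ r) :
    dist (ψ (γ₁⁻¹ * γ₂) x) x ≤ rp r + 3 * C := by
  obtain ⟨⟨-, hrp, -⟩, -, ⟨hone, hmul⟩, hemb⟩ := hψ
  have hback : dist (ψ γ₁⁻¹ (ψ γ₁ x)) x ≤ 2 * C := by
    calc dist (ψ γ₁⁻¹ (ψ γ₁ x)) x
        ≤ dist (ψ γ₁⁻¹ (ψ γ₁ x)) (ψ (γ₁⁻¹ * γ₁) x) + dist (ψ (γ₁⁻¹ * γ₁) x) x :=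
          dist_triangle _ _ _
      _ ≤ C + C := by
          gcongr
          · rw [dist_comm]; exact hmul _ _ _
          · rw [inv_mul_cancel]; exact hone x
      _ = 2 * C := by ring
  calc dist (ψ (γ₁⁻¹ * γ₂) x) x
      ≤ dist (ψ (γ₁⁻¹ * γ₂) x) (ψ γ₁⁻¹ (ψ γ₂ x)) + dist (ψ γ₁⁻¹ (ψ γ₂ x)) (ψ γ₁⁻¹ (ψ γ₁ x))
        + dist (ψ γ₁⁻¹ (ψ γ₁ x)) x := dist_triangle4 _ _ _ _
    _ ≤ C + rp r + 2 * C := by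
        gcongr
        · exact hmul _ _ _
        · exact (hemb γ₁⁻¹).dist_le_of_dist_le hrp h
    _ = rp r + 3 * C := by ring

theorem IsProperNearAction.finite_setOf_dist_le {G X : Type*} [Group G] [MetricSpace X]
    {ψ : G → X → X} (hψ : IsProperNearAction ψ) (x : X) (r : ℝ) :
    {γ : G | dist (ψ γ x) x ≤ r}.Finite := by
  obtain ⟨M, hM⟩ := hψ (max r 1) (by positivity)
  refine Set.finite_of_encard_le_coe ((Set.encard_mono ?_).trans (hM x x))
  intro γ hγ
  exact ⟨x, mem_closedBall_self (by positivity), mem_closedBall.2 (hγ.trans (le_max_left _ _))⟩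

section ChainGeneration

variable {G X : Type*} [Group G] [PseudoMetricSpace X] {f : G → X} {R : ℝ} {S : Set G}

theorem mem_closure_of_dist_chain_le (hS : ∀ γ₁ γ₂ : G, dist (f γ₂) (f γ₁) ≤ 3 * R → γ₁⁻¹ * γ₂ ∈ S)
    (hdense : ∀ y : X, ∃ γ : G, dist (f γ) y ≤ R) {c : ℕ → X} (hc0 : c 0 = f 1) :
    ∀ n : ℕ, (∀ i < n, dist (c i) (c (i + 1)) ≤ R) →
      ∀ γ : G, dist (f γ) (c n) ≤ R → γ ∈ Subgroup.closure S := by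
  intro n
  induction n with
  | zero =>
    intro _ γ hγ
    rw [hc0] at hγ
    have hR : 0 ≤ R := dist_nonneg.trans hγ
    simpa using Subgroup.subset_closure (hS 1 γ (by linarith))
  | succ n ih =>
    intro hsteps γ hγ
    obtain ⟨γ', hγ'⟩ := hdense (c n)
    have hγ'_mem : γ' ∈ Subgroup.closure S := ih (fun i hi => hsteps i (by omega)) γ' hγ'
    have hclose : dist (f γ) (f γ') ≤ 3 * R := by
      calc dist (f γ) (f γ')
          ≤ dist (f γ) (c (n + 1)) + dist (c (n + 1)) (c n) + dist (c n) (f γ') :=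
            dist_triangle4 _ _ _ _
        _ ≤ R + R + R := by
            gcongr
            · rw [dist_comm]; exact hsteps n n.lt_succ_self
            · rw [dist_comm]; exact hγ'
        _ = 3 * R := by ring
    rw [← mul_inv_cancel_left γ' γ]
    exact mul_mem hγ'_mem (Subgroup.subset_closure (hS γ' γ hclose))

theorem closure_eq_top_of_dist_chain_of_dense
    (hS : ∀ γ₁ γ₂ : G, dist (f γ₂) (f γ₁) ≤ 3 * R → γ₁⁻¹ * γ₂ ∈ S)
    (hchain : ∀ x x' : X, ∃ (n : ℕ) (c : ℕ → X), c 0 = x ∧ c n = x' ∧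
      ∀ i < n, dist (c i) (c (i + 1)) ≤ R)
    (hdense : ∀ y : X, ∃ γ : G, dist (f γ) y ≤ R) :
    Subgroup.closure S = ⊤ := by
  refine eq_top_iff.2 fun γ _ => ?_
  obtain ⟨n, c, hc0, hcn, hsteps⟩ := hchain (f 1) (f γ)
  obtain ⟨γ', hγ'⟩ := hdense (f γ)
  exact mem_closure_of_dist_chain_le hS hdense hc0 n hsteps γ
    (by rw [hcn, dist_self]; exact dist_nonneg.trans hγ')

end ChainGeneration

theorem stmt3_general {G X : Type*} [Group G] [MetricSpace X] (rm rp : ℝ → ℝ) (C : ℝ)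
    (ψ : G → X → X) (hψ : IsCoarseNearAction rm rp C ψ)
    (x₀ : X) (R : ℝ)
    (hchain : ∀ x x' : X, ∃ (n : ℕ) (c : ℕ → X), c 0 = x ∧ c n = x' ∧
      ∀ i < n, dist (c i) (c (i + 1)) ≤ R)
    (hdense : ∀ y : X, ∃ γ : G, dist (ψ γ x₀) y ≤ R) :
    Subgroup.closure {γ : G | dist (ψ γ x₀) x₀ ≤ rp (3 * R) + 3 * C} = ⊤ ∧
    (IsProperNearAction ψ →
      {γ : G | dist (ψ γ x₀) x₀ ≤ rp (3 * R) + 3 * C}.Finite ∧ Group.FG G) := by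
  have hgen : Subgroup.closure {γ : G | dist (ψ γ x₀) x₀ ≤ rp (3 * R) + 3 * C} = ⊤ :=
    closure_eq_top_of_dist_chain_of_dense (f := fun γ => ψ γ x₀)
      (fun _ _ h => hψ.dist_inv_mul_smul_le h) hchain hdense
  refine ⟨hgen, fun hproper => ?_⟩
  have hfin := hproper.finite_setOf_dist_le x₀ (rp (3 * R) + 3 * C)
  exact ⟨hfin, Group.fg_iff.2 ⟨_, hgen, hfin⟩⟩

/-- If `X` is `R`-chain connected and the orbit of `x₀` is `R`-dense, then
`S = {γ : d(ψ(γ)(x₀), x₀) ≤ ρ₊(3R) + 3C}` generates `G`; if moreover `ψ` is proper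
then `S` is finite, so `G` is finitely generated. -/
theorem stmt3 {G X : Type*} [Group G] [MetricSpace X] (rm rp : ℝ → ℝ) (C : ℝ)
    (ψ : G → X → X) (hψ : IsCoarseNearAction rm rp C ψ)
    (x₀ : X) (R : ℝ) (hR : 0 < R)
    (hchain : ∀ x x' : X, ∃ (n : ℕ) (c : ℕ → X), c 0 = x ∧ c n = x' ∧
      ∀ i < n, dist (c i) (c (i + 1)) ≤ R)
    (hdense : ∀ y : X, ∃ γ : G, dist (ψ γ x₀) y ≤ R) :
    Subgroup.closure {γ : G | dist (ψ γ x₀) x₀ ≤ rp (3 * R) + 3 * C} = ⊤ ∧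
    (IsProperNearAction ψ →
      {γ : G | dist (ψ γ x₀) x₀ ≤ rp (3 * R) + 3 * C}.Finite ∧ Group.FG G) :=
  stmt3_general rm rp C ψ hψ x₀ R hchain hdense
end

section
/- Suppose a coarsely connected metric space (X,d) admits a proper, cobounded (ρ₋,ρ₊,C)-coarse near-action ψ by a group G. Then G is finitely generated and, for any x₀ ∈ X, there exists a finite symmetric generating set S of G such that the orbit map γ ↦ ψ(γ)(x₀) is a coarse equivalence from (G, d_S) to (X,d), where d_S is the word metric determined by S. -/
open Metric Filter

/-- The near-action `ψ` is cobounded. -/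
def IsCoboundedNearAction {G X : Type*} [Group G] [MetricSpace X] (ψ : G → X → X) : Prop :=
  ∃ (x₀ : X) (R : ℝ), 0 < R ∧ ∀ y : X, ∃ γ : G, dist (ψ γ x₀) y < R

/-- `X` is coarsely connected: some `R > 0` joins any two points by an `R`-chain. -/
def IsCoarselyConnected (X : Type*) [MetricSpace X] : Prop :=
  ∃ R : ℝ, 0 < R ∧ ∀ x x' : X, ∃ (n : ℕ) (c : ℕ → X), c 0 = x ∧ c n = x' ∧
    ∀ i < n, dist (c i) (c (i + 1)) ≤ R

/-- The word metric on `G` determined by a generating set `S`: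
`wordDist S g h` is the least `n` such that `g⁻¹ * h` is a product of `n` elements of `S`. -/
noncomputable def wordDist {G : Type*} [Group G] (S : Set G) (g h : G) : ℝ :=
  ((sInf {n : ℕ | ∃ l : List G, l.length = n ∧ (∀ x ∈ l, x ∈ S) ∧ l.prod = g⁻¹ * h} : ℕ) : ℝ)

/-- A coarse equivalence from `(A, dA)` to `(B, dB)`: a coarse embedding that is
`C`-surjective for some `C ≥ 0`. -/
def IsCoarseEquivPair {A B : Type*} (dA : A → A → ℝ) (dB : B → B → ℝ) (f : A → B) : Prop :=
  (∃ rm rp : ℝ → ℝ, ControlFns rm rp ∧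
    ∀ a₁ a₂ : A, rm (dA a₁ a₂) ≤ dB (f a₁) (f a₂) ∧
      dB (f a₁) (f a₂) ≤ rp (dA a₁ a₂)) ∧
  ∃ C : ℝ, 0 ≤ C ∧ ∀ b : B, ∃ a : A, dB b (f a) ≤ C

/-! The orbit of `x₀` is coarsely dense, so by coarse connectedness any orbit point is reached
from `x₀` by a chain of orbit points with bounded jumps. The increments of such a chain have
bounded displacement, and by properness there are finitely many such elements, which therefore
generate `G`. A word of length `n` moves `x₀` by at most a multiple of `n`; conversely, properness
bounds the word length of the elements of bounded displacement, and inverting this bound gives the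
lower control. -/

open Set Pointwise

lemma IsCoarselyConnected.exists_eq_univ_of_step_closed {X : Type*} [MetricSpace X]
    (hX : IsCoarselyConnected X) :
    ∃ R, 0 < R ∧ ∀ A : Set X, A.Nonempty → (∀ z ∈ A, ∀ z', dist z z' ≤ R → z' ∈ A) →
      A = univ := by
  obtain ⟨R, hR, hchain⟩ := hX
  refine ⟨R, hR, fun A ⟨x, hx⟩ hA => eq_univ_of_forall fun y => ?_⟩
  obtain ⟨n, c, rfl, rfl, hc⟩ := hchain x y
  suffices ∀ i ≤ n, c i ∈ A from this n le_rfl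
  intro i hi
  induction i with
  | zero => exact hx
  | succ i ih => exact hA _ (ih (by omega)) _ (hc i (by omega))

lemma exists_monotone_bound_of_finite_sublevel {α : Type*} (f g : α → ℝ)
    (hfin : ∀ D, {a | g a ≤ D}.Finite) :
    ∃ B : ℝ → ℝ, Monotone B ∧ ∀ a D, g a ≤ D → f a ≤ B D := by
  have hbdd : ∀ D, BddAbove (insert 0 (f '' {a | g a ≤ D})) :=
    fun D => (((hfin D).image f).insert 0).bddAbove
  refine ⟨fun D => sSup (insert 0 (f '' {a | g a ≤ D})), fun D D' hD => ?_,
    fun a D ha => le_csSup (hbdd D) (mem_insert_of_mem _ ⟨a, ha, rfl⟩)⟩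
  refine csSup_le_csSup (hbdd D') (insert_nonempty _ _) (insert_subset_insert ?_)
  exact image_mono fun a (ha : g a ≤ D) => ha.trans hD

lemma exists_lower_control_of_monotoneOn {F : ℝ → ℝ} (hF : MonotoneOn F (Ici 0)) :
    ∃ ρ : ℝ → ℝ, Monotone ρ ∧ (∀ u, 0 ≤ ρ u) ∧ Tendsto ρ atTop atTop ∧
      ∀ u d, 0 ≤ d → u ≤ F d → ρ u ≤ d := by
  -- `ρ` is a generalized inverse of `e ↦ F e + e`; the summand `e` makes that map unbounded.
  set T : ℝ → Set ℝ := fun u => {e | 0 ≤ e ∧ u ≤ F e + e}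
  have hT : ∀ u, (T u).Nonempty := fun u =>
    ⟨max (u - F 0) 0, le_max_right _ _, by
      linarith [hF self_mem_Ici (mem_Ici.2 (le_max_right (u - F 0) 0)) (le_max_right _ _),
        le_max_left (u - F 0) 0]⟩
  have hbdd : ∀ u, BddBelow (T u) := fun u => ⟨0, fun e he => he.1⟩
  refine ⟨fun u => sInf (T u), fun u u' hu => ?_, fun u => le_csInf (hT u) fun e he => he.1,
    ?_, fun u d hd hu => csInf_le (hbdd u) ⟨hd, by linarith⟩⟩
  · exact csInf_le_csInf (hbdd u) (hT u') fun e he => ⟨he.1, hu.trans he.2⟩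
  · refine tendsto_atTop.2 fun b => ?_
    filter_upwards [eventually_gt_atTop (F (max b 0) + max b 0)] with u hu
    refine le_csInf (hT u) fun e ⟨he, hue⟩ => ?_
    by_contra! hbe
    have hle : e ≤ max b 0 := hbe.le.trans (le_max_left _ _)
    linarith [hF he (mem_Ici.2 (le_max_right b 0)) hle]

section NearAction

variable {G X : Type*} [Group G] [MetricSpace X] {C : ℝ} {rm rp : ℝ → ℝ} {ψ : G → X → X}

lemma IsCNearAction.dist_orbit_inv_mul_le (hact : IsCNearAction C ψ)
    (hψ : ∀ γ x y, dist (ψ γ x) (ψ γ y) ≤ rp (dist x y)) (x₀ : X) (g h : G) :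
    dist (ψ (g⁻¹ * h) x₀) x₀ ≤ 3 * C + rp (dist (ψ g x₀) (ψ h x₀)) := by
  have hcancel := hact.2 g⁻¹ g x₀
  rw [inv_mul_cancel, dist_comm] at hcancel
  calc dist (ψ (g⁻¹ * h) x₀) x₀
      ≤ dist (ψ (g⁻¹ * h) x₀) (ψ g⁻¹ (ψ h x₀)) + dist (ψ g⁻¹ (ψ h x₀)) (ψ g⁻¹ (ψ g x₀))
        + dist (ψ g⁻¹ (ψ g x₀)) (ψ 1 x₀) + dist (ψ 1 x₀) x₀ := by
        linarith [dist_triangle4 (ψ (g⁻¹ * h) x₀) (ψ g⁻¹ (ψ h x₀)) (ψ g⁻¹ (ψ g x₀)) x₀,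
          dist_triangle (ψ g⁻¹ (ψ g x₀)) (ψ 1 x₀) x₀]
    _ ≤ C + rp (dist (ψ g x₀) (ψ h x₀)) + C + C := by
        linarith [hact.2 g⁻¹ h x₀, dist_comm (ψ g x₀) (ψ h x₀) ▸ hψ g⁻¹ (ψ h x₀) (ψ g x₀),
          hact.1 x₀]
    _ = 3 * C + rp (dist (ψ g x₀) (ψ h x₀)) := by ring

lemma IsCNearAction.dist_orbit_mul_le (hact : IsCNearAction C ψ)
    (hψ : ∀ γ x y, dist (ψ γ x) (ψ γ y) ≤ rp (dist x y)) (x₀ : X) (γ s : G) :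
    dist (ψ (γ * s) x₀) (ψ γ x₀) ≤ C + rp (dist (ψ s x₀) x₀) := by
  linarith [dist_triangle (ψ (γ * s) x₀) (ψ γ (ψ s x₀)) (ψ γ x₀), hact.2 γ s x₀,
    hψ γ (ψ s x₀) x₀]

lemma IsCNearAction.dist_orbit_mul_list_prod_le (hact : IsCNearAction C ψ)
    (hrp : MonotoneOn rp (Ici 0)) (hψ : ∀ γ x y, dist (ψ γ x) (ψ γ y) ≤ rp (dist x y))
    (x₀ : X) {L : ℝ} (l : List G) (hl : ∀ s ∈ l, dist (ψ s x₀) x₀ ≤ L) (γ : G) :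
    dist (ψ (γ * l.prod) x₀) (ψ γ x₀) ≤ (C + rp L) * l.length := by
  induction l generalizing γ with
  | nil => simp
  | cons s l ih =>
    have hs := hl s List.mem_cons_self
    have hstep := hact.dist_orbit_mul_le hψ x₀ γ s
    have hrps := hrp (mem_Ici.2 dist_nonneg) (mem_Ici.2 (dist_nonneg.trans hs)) hs
    have htail := ih (fun t ht => hl t (List.mem_cons_of_mem s ht)) (γ * s)
    rw [List.prod_cons, ← mul_assoc, List.length_cons, Nat.cast_succ]
    linarith [dist_triangle (ψ (γ * s * l.prod) x₀) (ψ (γ * s) x₀) (ψ γ x₀)]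

lemma IsCoboundedNearAction.exists_dist_orbit_le (hcb : IsCoboundedNearAction ψ)
    (hψ : ∀ γ x y, dist (ψ γ x) (ψ γ y) ≤ rp (dist x y)) (x₀ : X) :
    ∃ K, 0 ≤ K ∧ ∀ y, ∃ g : G, dist (ψ g x₀) y ≤ K := by
  obtain ⟨z₀, R, hR, hcover⟩ := hcb
  have hrp0 : 0 ≤ rp (dist x₀ z₀) := dist_nonneg.trans (hψ 1 x₀ z₀)
  refine ⟨R + rp (dist x₀ z₀), by linarith, fun y => ?_⟩
  obtain ⟨g, hg⟩ := hcover y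
  exact ⟨g, by linarith [dist_triangle (ψ g x₀) (ψ g z₀) y, hψ g x₀ z₀]⟩

lemma IsProperNearAction.finite_setOf_dist_orbit_le (hproper : IsProperNearAction ψ) (x₀ : X)
    (D : ℝ) : {γ | dist (ψ γ x₀) x₀ ≤ D}.Finite := by
  obtain ⟨M, hM⟩ := hproper (max D 1) (by positivity)
  have hsub : {γ | dist (ψ γ x₀) x₀ ≤ D} ⊆
      {γ | ∃ z ∈ closedBall x₀ (max D 1), ψ γ z ∈ closedBall x₀ (max D 1)} :=
    fun γ hγ => ⟨x₀, mem_closedBall_self (by positivity), hγ.trans (le_max_left D 1)⟩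
  rw [← encard_ne_top_iff]
  exact ((encard_mono hsub).trans (hM x₀ x₀)).trans_lt (WithTop.coe_lt_top M) |>.ne

lemma exists_closure_setOf_dist_orbit_le_eq_top (hX : IsCoarselyConnected X)
    (hact : IsCNearAction C ψ) (hrp : MonotoneOn rp (Ici 0))
    (hψ : ∀ γ x y, dist (ψ γ x) (ψ γ y) ≤ rp (dist x y)) {x₀ : X} {K : ℝ} (hK0 : 0 ≤ K)
    (hK : ∀ y, ∃ g : G, dist (ψ g x₀) y ≤ K) :
    ∃ L, Subgroup.closure {γ | dist (ψ γ x₀) x₀ ≤ L} = ⊤ := by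
  obtain ⟨R, hR, hstep⟩ := hX.exists_eq_univ_of_step_closed
  set H := Subgroup.closure {γ | dist (ψ γ x₀) x₀ ≤ 3 * C + rp (2 * K + R)}
  have hmem : ∀ g g', dist (ψ g x₀) (ψ g' x₀) ≤ 2 * K + R → g ∈ H → g' ∈ H := by
    intro g g' hgg' hg
    have hdisp := hact.dist_orbit_inv_mul_le hψ x₀ g g'
    have hrpgg' := hrp (mem_Ici.2 dist_nonneg) (mem_Ici.2 (dist_nonneg.trans hgg')) hgg'
    have hinc : g⁻¹ * g' ∈ H :=
      Subgroup.subset_closure (show dist (ψ (g⁻¹ * g') x₀) x₀ ≤ _ by linarith)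
    simpa using H.mul_mem hg hinc
  -- The points `K`-close to the `H`-orbit of `x₀` form an `R`-step-closed set.
  have hA := hstep {y | ∃ g ∈ H, dist (ψ g x₀) y ≤ K} ⟨ψ 1 x₀, 1, H.one_mem, by simpa⟩ <| by
    rintro z ⟨g, hg, hgz⟩ z' hzz'
    obtain ⟨g', hg'⟩ := hK z'
    refine ⟨g', hmem g g' ?_ hg, hg'⟩
    linarith [dist_triangle4 (ψ g x₀) z z' (ψ g' x₀), dist_comm (ψ g' x₀) z']
  refine ⟨3 * C + rp (2 * K + R), eq_top_iff.2 fun γ _ => ?_⟩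
  obtain ⟨g, hg, hgγ⟩ : ψ γ x₀ ∈ {y | ∃ g ∈ H, dist (ψ g x₀) y ≤ K} := hA ▸ mem_univ _
  exact hmem g γ (by linarith) hg

lemma exists_dist_orbit_le_mul_wordDist (hC : 0 ≤ C) (hact : IsCNearAction C ψ)
    (hrp : MonotoneOn rp (Ici 0)) (hrp0 : ∀ r, 0 ≤ r → 0 ≤ rp r)
    (hψ : ∀ γ x y, dist (ψ γ x) (ψ γ y) ≤ rp (dist x y)) {S : Set G} (hSfin : S.Finite)
    (hS : Submonoid.closure S = ⊤) (x₀ : X) :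
    ∃ A, 0 ≤ A ∧ ∀ g h, dist (ψ g x₀) (ψ h x₀) ≤ A * wordDist S g h := by
  obtain ⟨L, hL⟩ := (hSfin.image fun s => dist (ψ s x₀) x₀).bddAbove
  refine ⟨C + rp (max L 0), add_nonneg hC (hrp0 _ (le_max_right L 0)), fun g h => ?_⟩
  obtain ⟨l₀, hl₀, hprod₀⟩ :=
    Submonoid.exists_list_of_mem_closure (hS ▸ Submonoid.mem_top (g⁻¹ * h))
  obtain ⟨l, hlen, hlS, hprod⟩ := Nat.sInf_mem (s := {n | ∃ l : List G, l.length = n ∧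
    (∀ x ∈ l, x ∈ S) ∧ l.prod = g⁻¹ * h}) ⟨l₀.length, l₀, rfl, hl₀, hprod₀⟩
  have hbound := hact.dist_orbit_mul_list_prod_le hrp hψ x₀ l
    (fun s hs => (hL ⟨s, hlS s hs, rfl⟩).trans (le_max_left L 0)) g
  rw [hprod, mul_inv_cancel_left] at hbound
  rw [dist_comm, wordDist, ← hlen]
  exact hbound

lemma exists_control_le_dist_orbit_wordDist (hact : IsCNearAction C ψ)
    (hrp : MonotoneOn rp (Ici 0)) (hψ : ∀ γ x y, dist (ψ γ x) (ψ γ y) ≤ rp (dist x y)) (x₀ : X)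
    (hfin : ∀ D, {γ : G | dist (ψ γ x₀) x₀ ≤ D}.Finite) (S : Set G) :
    ∃ ρ : ℝ → ℝ, Monotone ρ ∧ (∀ u, 0 ≤ ρ u) ∧ Tendsto ρ atTop atTop ∧
      ∀ g h, ρ (wordDist S g h) ≤ dist (ψ g x₀) (ψ h x₀) := by
  obtain ⟨B, hB, hBle⟩ := exists_monotone_bound_of_finite_sublevel (wordDist S 1) _ hfin
  obtain ⟨ρ, hρ, hρ0, hρtop, hρle⟩ :=
    exists_lower_control_of_monotoneOn (F := fun d => B (3 * C + rp d))
      fun d hd d' hd' hdd' => hB (by linarith [hrp hd hd' hdd'])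
  refine ⟨ρ, hρ, hρ0, hρtop, fun g h => hρle _ _ dist_nonneg ?_⟩
  have hword : wordDist S g h = wordDist S 1 (g⁻¹ * h) := by simp [wordDist]
  exact hword ▸ hBle _ _ (hact.dist_orbit_inv_mul_le hψ x₀ g h)

lemma exists_controlFns_wordDist_orbit (hψ : IsCoarseNearAction rm rp C ψ)
    (hproper : IsProperNearAction ψ) {S : Set G} (hSfin : S.Finite)
    (hS : Submonoid.closure S = ⊤) (x₀ : X) :
    ∃ rm' rp' : ℝ → ℝ, ControlFns rm' rp' ∧ ∀ g h : G,
      rm' (wordDist S g h) ≤ dist (ψ g x₀) (ψ h x₀) ∧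
        dist (ψ g x₀) (ψ h x₀) ≤ rp' (wordDist S g h) := by
  obtain ⟨⟨-, hrp, -, hrp0, -⟩, hC, hact, hemb⟩ := hψ
  have hψ : ∀ γ x y, dist (ψ γ x) (ψ γ y) ≤ rp (dist x y) := fun γ x y => (hemb γ x y).2
  obtain ⟨ρ, hρ, hρ0, hρtop, hlower⟩ := exists_control_le_dist_orbit_wordDist hact hrp hψ x₀
    (hproper.finite_setOf_dist_orbit_le x₀) S
  obtain ⟨A, hA0, hupper⟩ := exists_dist_orbit_le_mul_wordDist hC hact hrp hrp0 hψ hSfin hS x₀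
  refine ⟨ρ, (A * ·), ⟨hρ.monotoneOn _, fun a _ b _ hab => mul_le_mul_of_nonneg_left hab hA0,
    fun r _ => hρ0 r, fun r hr => mul_nonneg hA0 hr, hρtop⟩, fun g h => ⟨hlower g h, hupper g h⟩⟩

theorem exists_wordDist_isCoarseEquivPair_orbit (hX : IsCoarselyConnected X)
    (hψ : IsCoarseNearAction rm rp C ψ) (hproper : IsProperNearAction ψ)
    (hcb : IsCoboundedNearAction ψ) (x₀ : X) :
    ∃ S : Set G, S.Finite ∧ (∀ s ∈ S, s⁻¹ ∈ S) ∧ Subgroup.closure S = ⊤ ∧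
      IsCoarseEquivPair (wordDist S) dist (fun γ : G => ψ γ x₀) := by
  obtain ⟨⟨-, hrp, -⟩, -, hact, hemb⟩ := id hψ
  have hψrp : ∀ γ x y, dist (ψ γ x) (ψ γ y) ≤ rp (dist x y) := fun γ x y => (hemb γ x y).2
  obtain ⟨K, hK0, hK⟩ := hcb.exists_dist_orbit_le hψrp x₀
  obtain ⟨L, hgen⟩ := exists_closure_setOf_dist_orbit_le_eq_top hX hact hrp hψrp hK0 hK
  set S₀ := {γ | dist (ψ γ x₀) x₀ ≤ L}
  have hS₀fin := hproper.finite_setOf_dist_orbit_le x₀ L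
  have hS : Submonoid.closure (S₀ ∪ S₀⁻¹) = ⊤ := by
    rw [← Subgroup.closure_toSubmonoid, hgen]
    rfl
  refine ⟨S₀ ∪ S₀⁻¹, hS₀fin.union hS₀fin.inv,
    fun s hs => by rwa [← Set.mem_inv, union_inv, inv_inv, union_comm],
    top_unique (hgen ▸ Subgroup.closure_mono subset_union_left),
    exists_controlFns_wordDist_orbit hψ hproper (hS₀fin.union hS₀fin.inv) hS x₀,
    K, hK0, fun y => (hK y).imp fun g hg => dist_comm y _ ▸ hg⟩

end NearAction

/-- Generalized Švarc–Milnor: a proper cobounded coarse near-action on a coarsely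
connected metric space makes `G` finitely generated, and each orbit map a coarse
equivalence from `G` (with a word metric) to `X`. -/
theorem stmt4 {G X : Type*} [Group G] [MetricSpace X]
    (hX : IsCoarselyConnected X) (rm rp : ℝ → ℝ) (C : ℝ) (ψ : G → X → X)
    (hψ : IsCoarseNearAction rm rp C ψ)
    (hproper : IsProperNearAction ψ) (hcb : IsCoboundedNearAction ψ) :
    Group.FG G ∧ ∀ x₀ : X, ∃ S : Set G, S.Finite ∧ (∀ s ∈ S, s⁻¹ ∈ S) ∧
      Subgroup.closure S = ⊤ ∧
      IsCoarseEquivPair (wordDist S) dist (fun γ : G => ψ γ x₀) := by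
  refine ⟨?_, exists_wordDist_isCoarseEquivPair_orbit hX hψ hproper hcb⟩
  obtain ⟨x₀, -⟩ := id hcb
  obtain ⟨S, hSfin, -, hS, -⟩ := exists_wordDist_isCoarseEquivPair_orbit hX hψ hproper hcb x₀
  exact Group.fg_iff.2 ⟨S, hS, hSfin⟩
end

section
/- Let G be a group equipped with a proper left-invariant metric δ (left-invariant, and every closed δ-ball is a finite set), let (X,d) be a metric space, let f₁ : G → X be a (ρ₋,ρ₊)-coarse embedding that is C-surjective, and let f₂ : X → G be a (σ₋,σ₊)-coarse embedding with d(x, f₁(f₂(x))) ≤ C for all x ∈ X and δ(γ, f₂(f₁(γ))) ≤ C for all γ ∈ G. Define ψ(γ)(x) = f₁(γ·f₂(x)). Then ψ is proper: for every R > 0 there exists M ∈ ℕ such that for all x, y ∈ X the set {γ ∈ G : ψ(γ)(B[x,R]) ∩ B[y,R] ≠ ∅} has at most M elements, where B[x,R] denotes the closed metric ball. -/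
/- The set of `γ` in question lies in the set of `γ` moving some point of `closedBall (f₂ x) (sp R)`
into `closedBall (f₂ y) (C + sp R)`. For a left-invariant metric every such `γ` has the form
`(f₂ y * u) * (f₂ x * v)⁻¹` with `u, v` in fixed balls around `1`, whose finiteness gives a bound
independent of `x` and `y`. -/

open Metric Filter

section LeftInvariant

variable {G : Type*} [Group G] [MetricSpace G]

lemma dist_inv_mul_one_of_leftInvariant
    (hinv : ∀ γ g₁ g₂ : G, dist (γ * g₁) (γ * g₂) = dist g₁ g₂) (a c : G) : dist (a⁻¹ * c) 1 = dist c a := by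
  simpa using hinv a⁻¹ c a

lemma encard_setOf_mul_mem_closedBall_le_of_leftInvariant
    (hinv : ∀ γ g₁ g₂ : G, dist (γ * g₁) (γ * g₂) = dist g₁ g₂) (a b : G) (r s : ℝ) :
    {γ : G | ∃ g ∈ closedBall a s, γ * g ∈ closedBall b r}.encard ≤
      (closedBall (1 : G) r ×ˢ closedBall (1 : G) s).encard := by
  have hsub : {γ : G | ∃ g ∈ closedBall a s, γ * g ∈ closedBall b r} ⊆
      (fun p : G × G => (b * p.1) * (a * p.2)⁻¹) '' (closedBall 1 r ×ˢ closedBall 1 s) := by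
    rintro γ ⟨g, hg, hγg⟩
    refine ⟨(b⁻¹ * (γ * g), a⁻¹ * g), ⟨?_, ?_⟩, by group⟩
    · rwa [mem_closedBall, dist_inv_mul_one_of_leftInvariant hinv]
    · rwa [mem_closedBall, dist_inv_mul_one_of_leftInvariant hinv]
  exact (Set.encard_mono hsub).trans (Set.encard_image_le _ _)

end LeftInvariant

lemma IsCoarseEmbeddingWith.dist_le {X Y : Type*} [MetricSpace X] [MetricSpace Y]
    {rm rp : ℝ → ℝ} {f : X → Y} (hf : IsCoarseEmbeddingWith rm rp f)
    (hrp : MonotoneOn rp (Set.Ici 0)) {x₁ x₂ : X} {R : ℝ} (h : dist x₁ x₂ ≤ R) :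
    dist (f x₁) (f x₂) ≤ rp R :=
  (hf x₁ x₂).2.trans (hrp dist_nonneg (dist_nonneg.trans h) h)

theorem stmt10_general {G X : Type*} [Group G] [MetricSpace G] [MetricSpace X]
    (hinv : ∀ γ g₁ g₂ : G, dist (γ * g₁) (γ * g₂) = dist g₁ g₂)
    (hproperG : ∀ (g : G) (r : ℝ), (closedBall g r).Finite)
    (sm sp : ℝ → ℝ) (hs : ControlFns sm sp) (C : ℝ)
    (f₁ : G → X)
    (f₂ : X → G) (hf₂ : IsCoarseEmbeddingWith sm sp f₂)
    (hf₂γ : ∀ γ : G, dist γ (f₂ (f₁ γ)) ≤ C)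
    (ψ : G → X → X) (hψdef : ∀ (γ : G) (x : X), ψ γ x = f₁ (γ * f₂ x)) :
    ∀ R : ℝ, 0 < R → ∃ M : ℕ, ∀ x y : X,
      {γ : G | ∃ z ∈ closedBall x R, ψ γ z ∈ closedBall y R}.encard ≤ (M : ℕ∞) := by
  intro R _
  set B := closedBall (1 : G) (C + sp R) ×ˢ closedBall (1 : G) (sp R)
  have hB : B.Finite := (hproperG 1 _).prod (hproperG 1 _)
  refine ⟨B.ncard, fun x y => ?_⟩
  rw [hB.cast_ncard_eq]
  refine le_trans (Set.encard_mono ?_)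
    (encard_setOf_mul_mem_closedBall_le_of_leftInvariant hinv (f₂ x) (f₂ y) _ _)
  rintro γ ⟨z, hz, hψz⟩
  rw [hψdef, mem_closedBall] at hψz
  refine ⟨f₂ z, hf₂.dist_le hs.2.1 hz, ?_⟩
  calc dist (γ * f₂ z) (f₂ y)
      ≤ dist (γ * f₂ z) (f₂ (f₁ (γ * f₂ z))) + dist (f₂ (f₁ (γ * f₂ z))) (f₂ y) :=
        dist_triangle _ _ _
    _ ≤ C + sp R := add_le_add (hf₂γ _) (hf₂.dist_le hs.2.1 hψz)

/-- The conjugated near-action is proper when `G` carries a proper left-invariant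
metric. -/
theorem stmt10 {G X : Type*} [Group G] [MetricSpace G] [MetricSpace X]
    (hinv : ∀ γ g₁ g₂ : G, dist (γ * g₁) (γ * g₂) = dist g₁ g₂)
    (hproperG : ∀ (g : G) (r : ℝ), (closedBall g r).Finite)
    (rm rp sm sp : ℝ → ℝ) (hr : ControlFns rm rp) (hs : ControlFns sm sp) (C : ℝ)
    (f₁ : G → X) (hf₁ : IsCoarseEmbeddingWith rm rp f₁)
    (hsurj : ∀ y : X, ∃ γ : G, dist y (f₁ γ) ≤ C)
    (f₂ : X → G) (hf₂ : IsCoarseEmbeddingWith sm sp f₂)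
    (hf₂x : ∀ x : X, dist x (f₁ (f₂ x)) ≤ C)
    (hf₂γ : ∀ γ : G, dist γ (f₂ (f₁ γ)) ≤ C)
    (ψ : G → X → X) (hψdef : ∀ (γ : G) (x : X), ψ γ x = f₁ (γ * f₂ x)) :
    ∀ R : ℝ, 0 < R → ∃ M : ℕ, ∀ x y : X,
      {γ : G | ∃ z ∈ closedBall x R, ψ γ z ∈ closedBall y R}.encard ≤ (M : ℕ∞) :=
  stmt10_general hinv hproperG sm sp hs C f₁ f₂ hf₂ hf₂γ ψ hψdef
end

section
/- Let G be a countable group equipped with a proper left-invariant metric δ (left-invariant, and every closed δ-ball is a finite set), and suppose a metric space (X,d) is coarsely equivalent to (G,δ), i.e. there is a coarse equivalence f : (G,δ) → (X,d). Then there exist nondecreasing functions τ₋, τ₊ : [0,∞) → [0,∞) with τ₋(r) → ∞ as r → ∞ and a constant C' ≥ 0 such that X admits a proper, cobounded (τ₋,τ₊,C')-coarse near-action by G. -/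
open Metric Filter

/-!
Choose a quasi-inverse `g : X → G` of `f`, with `dist x (f (g x)) ≤ C`, and let `γ` act by
`x ↦ f (γ * g x)`: the left action of `G` on itself transported along `f`. Left-invariance of the
metric makes every such map as coarse as `f ∘ g`; the near-action defects are controlled by how far
`g ∘ f` moves points of `G`; and for the elements `γ` whose map sends a point of `B[x,R]` into `B[y,R]`,
the points `γ * g x` all lie in one bounded, hence finite, subset of `G`.
-/

lemma exists_monotone_le_of_tendsto_atTop {φ : ℝ → ℝ} (hφ : Tendsto φ atTop atTop) :
    ∃ N : ℝ → ℝ, Monotone N ∧ (∀ t, 0 ≤ N t) ∧ ∀ t d, φ d ≤ t → d ≤ N t := by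
  let S t := {r : ℝ | 0 ≤ r ∧ ∀ d, φ d ≤ t → d ≤ r}
  have hS : ∀ t, (S t).Nonempty := by
    intro t
    obtain ⟨r, hr⟩ := tendsto_atTop_atTop.mp hφ (t + 1)
    refine ⟨max r 0, le_max_right _ _, fun d hd => ?_⟩
    by_contra! h
    linarith [hr d ((le_max_left r 0).trans h.le)]
  refine ⟨fun t => sInf (S t), fun t t' htt' => ?_, fun t => le_csInf (hS t) fun r hr => hr.1,
    fun t d hd => le_csInf (hS t) fun r hr => hr.2 d hd⟩
  exact csInf_le_csInf ⟨0, fun r hr => hr.1⟩ (hS t') fun r hr =>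
    ⟨hr.1, fun d hd => hr.2 d (hd.trans htt')⟩

lemma exists_tendsto_atTop_le_of_monotoneOn {ρ : ℝ → ℝ} (hρ : MonotoneOn ρ (Set.Ici 0)) :
    ∃ I : ℝ → ℝ, Monotone I ∧ (∀ t, 0 ≤ I t) ∧ Tendsto I atTop atTop ∧
      ∀ t d, 0 ≤ d → t ≤ ρ d → I t ≤ d := by
  -- The summand `d` makes `I` tend to infinity even where `ρ` is bounded.
  let S t := {d : ℝ | 0 ≤ d ∧ t ≤ ρ d + d}
  have hS : ∀ t, (S t).Nonempty := fun t =>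
    ⟨max (t - ρ 0) 0, le_max_right _ _, by
      linarith [le_max_left (t - ρ 0) 0, hρ (le_refl (0 : ℝ)) (le_max_right (t - ρ 0) 0) (le_max_right _ _)]⟩
  have hS0 : ∀ t, BddBelow (S t) := fun t => ⟨0, fun d hd => hd.1⟩
  refine ⟨fun t => sInf (S t), fun t t' htt' => ?_, fun t => le_csInf (hS t) fun d hd => hd.1,
    tendsto_atTop_atTop.mpr fun b => ⟨ρ (max b 0) + max b 0 + 1, fun t ht => ?_⟩,
    fun t d hd htd => csInf_le (hS0 t) ⟨hd, by linarith⟩⟩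
  · exact csInf_le_csInf (hS0 t) (hS t') fun d hd => ⟨hd.1, htt'.trans hd.2⟩
  · refine (le_max_left b 0).trans (le_csInf (hS t) fun d hd => ?_)
    by_contra! hlt
    linarith [hd.2, hρ hd.1 (le_max_right b 0) hlt.le]

lemma ControlFns.comp {rm rp I N : ℝ → ℝ} (h : ControlFns rm rp) (hI : Monotone I)
    (hI0 : ∀ t, 0 ≤ I t) (hItop : Tendsto I atTop atTop) (hN : Monotone N) (hN0 : ∀ t, 0 ≤ N t) :
    ControlFns (rm ∘ I) (rp ∘ N) :=
  ⟨fun _ _ _ _ hab => h.1 (hI0 _) (hI0 _) (hI hab), fun _ _ _ _ hab => h.2.1 (hN0 _) (hN0 _) (hN hab),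
    fun r _ => h.2.2.1 _ (hI0 r), fun r _ => h.2.2.2.1 _ (hN0 r), h.2.2.2.2.comp hItop⟩

section QuasiInverse

variable {A B : Type*} [MetricSpace A] [MetricSpace B] {rm rp : ℝ → ℝ} {f : A → B} {g : B → A}
  {C : ℝ}

lemma IsCoarseEmbeddingWith.apply_dist_quasiInverse_le (hf : IsCoarseEmbeddingWith rm rp f)
    (hg : ∀ b, dist b (f (g b)) ≤ C) (x y : B) : rm (dist (g x) (g y)) ≤ dist x y + 2 * C :=
  calc rm (dist (g x) (g y)) ≤ dist (f (g x)) (f (g y)) := (hf _ _).1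
    _ ≤ dist (f (g x)) x + dist x y + dist y (f (g y)) := dist_triangle4 _ _ _ _
    _ ≤ dist x y + 2 * C := by rw [dist_comm]; linarith [hg x, hg y]

lemma IsCoarseEmbeddingWith.dist_le_apply_dist_quasiInverse (hf : IsCoarseEmbeddingWith rm rp f)
    (hg : ∀ b, dist b (f (g b)) ≤ C) (x y : B) : dist x y ≤ rp (dist (g x) (g y)) + 2 * C :=
  calc dist x y ≤ dist x (f (g x)) + dist (f (g x)) (f (g y)) + dist (f (g y)) y :=
        dist_triangle4 _ _ _ _
    _ ≤ rp (dist (g x) (g y)) + 2 * C := by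
        rw [dist_comm (f (g y))]; linarith [hg x, hg y, (hf (g x) (g y)).2]

lemma IsCoarseEmbeddingWith.apply_dist_quasiInverse_apply_le (hf : IsCoarseEmbeddingWith rm rp f)
    (hg : ∀ b, dist b (f (g b)) ≤ C) (a : A) : rm (dist a (g (f a))) ≤ C :=
  (hf _ _).1.trans (hg (f a))

end QuasiInverse

lemma isCoboundedNearAction_of_dist_le {G X : Type*} [Group G] [MetricSpace X] {ψ : G → X → X} (x₀ : X) (r : ℝ)
    (h : ∀ y, ∃ γ, dist (ψ γ x₀) y ≤ r) : IsCoboundedNearAction ψ :=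
  ⟨x₀, max r 0 + 1, by positivity, fun y =>
    (h y).imp fun _ hγ => hγ.trans_lt (by linarith [le_max_left r 0])⟩

section InducedNearAction

variable {G X : Type*} [Group G] [MetricSpace G] [MetricSpace X] {rm rp N : ℝ → ℝ} {f : G → X}
  {g : X → G} {C : ℝ}

lemma encard_le_encard_closedBall_one_of_dist_mul_le
    (hinv : ∀ γ g₁ g₂ : G, dist (γ * g₁) (γ * g₂) = dist g₁ g₂) (a : G) {S : Set G} {r : ℝ}
    (hS : ∀ γ ∈ S, ∀ γ' ∈ S, dist (γ * a) (γ' * a) ≤ r) :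
    S.encard ≤ (closedBall (1 : G) r).encard := by
  rcases S.eq_empty_or_nonempty with rfl | ⟨γ₀, hγ₀⟩
  · simp
  refine Set.encard_le_encard_of_injOn (f := fun γ => (γ₀ * a)⁻¹ * (γ * a)) (fun γ hγ => ?_)
    fun γ _ γ' _ h => by simpa using h
  rw [mem_closedBall, ← inv_mul_cancel (γ₀ * a), hinv]
  exact hS γ hγ γ₀ hγ₀

lemma IsCoarseEmbeddingWith.comp_mul_left
    (hinv : ∀ γ g₁ g₂ : G, dist (γ * g₁) (γ * g₂) = dist g₁ g₂) (hf : IsCoarseEmbeddingWith rm rp f)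
    (γ : G) : IsCoarseEmbeddingWith rm rp fun a => f (γ * a) := by
  intro a b
  rw [← hinv γ a b]
  exact hf _ _

def inducedNearAction (f : G → X) (g : X → G) (γ : G) (x : X) : X := f (γ * g x)

lemma dist_inducedNearAction_le_of_dist_le
    (hinv : ∀ γ g₁ g₂ : G, dist (γ * g₁) (γ * g₂) = dist g₁ g₂) (hf : IsCoarseEmbeddingWith rm rp f)
    (hg : ∀ x, dist x (f (g x)) ≤ C) (hrp : MonotoneOn rp (Set.Ici 0))
    (hN : ∀ t d, rm d ≤ t → d ≤ N t) (γ : G) {x y : X} {s : ℝ} (hxy : dist x y ≤ s) :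
    dist (inducedNearAction f g γ x) (inducedNearAction f g γ y) ≤ rp (N (s + 2 * C)) := by
  have hgxy : dist (g x) (g y) ≤ N (s + 2 * C) :=
    hN _ _ ((hf.apply_dist_quasiInverse_le hg x y).trans (by linarith))
  exact ((hf.comp_mul_left hinv γ _ _).2).trans (hrp dist_nonneg (dist_nonneg.trans hgxy) hgxy)

lemma isCoarseEmbeddingWith_inducedNearAction {I : ℝ → ℝ}
    (hinv : ∀ γ g₁ g₂ : G, dist (γ * g₁) (γ * g₂) = dist g₁ g₂) (hf : IsCoarseEmbeddingWith rm rp f)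
    (hg : ∀ x, dist x (f (g x)) ≤ C) (hrm : MonotoneOn rm (Set.Ici 0))
    (hrp : MonotoneOn rp (Set.Ici 0)) (hN : ∀ t d, rm d ≤ t → d ≤ N t) (hI0 : ∀ t, 0 ≤ I t)
    (hI : ∀ t d, 0 ≤ d → t ≤ rp d + 2 * C → I t ≤ d) (γ : G) :
    IsCoarseEmbeddingWith (rm ∘ I) (rp ∘ fun t => N (t + 2 * C)) (inducedNearAction f g γ) := by
  intro x y
  have hIgxy : I (dist x y) ≤ dist (g x) (g y) :=
    hI _ _ dist_nonneg (hf.dist_le_apply_dist_quasiInverse hg x y)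
  exact ⟨(hrm (hI0 _) dist_nonneg hIgxy).trans (hf.comp_mul_left hinv γ _ _).1,
    dist_inducedNearAction_le_of_dist_le hinv hf hg hrp hN γ le_rfl⟩

lemma isCNearAction_inducedNearAction
    (hinv : ∀ γ g₁ g₂ : G, dist (γ * g₁) (γ * g₂) = dist g₁ g₂) (hf : IsCoarseEmbeddingWith rm rp f)
    (hg : ∀ x, dist x (f (g x)) ≤ C) (hrp : MonotoneOn rp (Set.Ici 0))
    (hN : ∀ t d, rm d ≤ t → d ≤ N t) :
    IsCNearAction (max C (rp (N C))) (inducedNearAction f g) := by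
  refine ⟨fun x => ?_, fun γ₁ γ₂ x => ?_⟩
  · rw [inducedNearAction, one_mul, dist_comm]
    exact (hg x).trans (le_max_left _ _)
  · set a := γ₂ * g x
    have ha : dist a (g (f a)) ≤ N C := hN _ _ (hf.apply_dist_quasiInverse_apply_le hg a)
    calc dist (f (γ₁ * γ₂ * g x)) (f (γ₁ * g (f a))) = dist (f (γ₁ * a)) (f (γ₁ * g (f a))) := by
          rw [mul_assoc]
      _ ≤ rp (dist a (g (f a))) := (hf.comp_mul_left hinv γ₁ _ _).2
      _ ≤ max C (rp (N C)) := (hrp dist_nonneg (dist_nonneg.trans ha) ha).trans (le_max_right _ _)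

lemma isCoboundedNearAction_inducedNearAction
    (hinv : ∀ γ g₁ g₂ : G, dist (γ * g₁) (γ * g₂) = dist g₁ g₂) (hf : IsCoarseEmbeddingWith rm rp f)
    (hg : ∀ x, dist x (f (g x)) ≤ C) (hrp : MonotoneOn rp (Set.Ici 0))
    (hN : ∀ t d, rm d ≤ t → d ≤ N t) : IsCoboundedNearAction (inducedNearAction f g) := by
  refine isCoboundedNearAction_of_dist_le (f 1) (rp (N C) + C) fun y => ⟨g y, ?_⟩
  have h1 : dist (g (f 1)) 1 ≤ N C := by
    rw [dist_comm]; exact hN _ _ (hf.apply_dist_quasiInverse_apply_le hg 1)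
  calc dist (f (g y * g (f 1))) y ≤ dist (f (g y * g (f 1))) (f (g y * 1)) + dist (f (g y)) y := by
        rw [mul_one]; exact dist_triangle _ _ _
    _ ≤ rp (N C) + C := by
        rw [dist_comm (f (g y))]
        linarith [(hf.comp_mul_left hinv (g y) (g (f 1)) 1).2, hg y,
          hrp dist_nonneg (dist_nonneg.trans h1) h1]

lemma dist_inducedNearAction_le_of_mem_closedBall
    (hinv : ∀ γ g₁ g₂ : G, dist (γ * g₁) (γ * g₂) = dist g₁ g₂) (hf : IsCoarseEmbeddingWith rm rp f)
    (hg : ∀ x, dist x (f (g x)) ≤ C) (hrp : MonotoneOn rp (Set.Ici 0))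
    (hN : ∀ t d, rm d ≤ t → d ≤ N t) {γ : G} {x y z : X} {R : ℝ} (hz : z ∈ closedBall x R)
    (hγz : inducedNearAction f g γ z ∈ closedBall y R) :
    dist (inducedNearAction f g γ x) y ≤ rp (N (R + 2 * C)) + R := by
  rw [mem_closedBall] at hz hγz
  have hxz := dist_inducedNearAction_le_of_dist_le hinv hf hg hrp hN γ (dist_comm x z ▸ hz)
  linarith [dist_triangle (inducedNearAction f g γ x) (inducedNearAction f g γ z) y]

lemma isProperNearAction_inducedNearAction
    (hinv : ∀ γ g₁ g₂ : G, dist (γ * g₁) (γ * g₂) = dist g₁ g₂)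
    (hfin : ∀ r, (closedBall (1 : G) r).Finite) (hf : IsCoarseEmbeddingWith rm rp f)
    (hg : ∀ x, dist x (f (g x)) ≤ C) (hrp : MonotoneOn rp (Set.Ici 0))
    (hN : ∀ t d, rm d ≤ t → d ≤ N t) : IsProperNearAction (inducedNearAction f g) := by
  intro R _
  set Q := rp (N (R + 2 * C)) + R
  obtain ⟨M, hM⟩ := (hfin (N (2 * Q))).exists_encard_eq_coe
  refine ⟨M, fun x y => hM ▸ encard_le_encard_closedBall_one_of_dist_mul_le hinv (g x)
    fun γ hγ γ' hγ' => hN _ _ ?_⟩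
  obtain ⟨z, hz, hγz⟩ := hγ
  obtain ⟨z', hz', hγz'⟩ := hγ'
  calc rm (dist (γ * g x) (γ' * g x))
      ≤ dist (inducedNearAction f g γ x) (inducedNearAction f g γ' x) := (hf _ _).1
    _ ≤ dist (inducedNearAction f g γ x) y + dist (inducedNearAction f g γ' x) y :=
        dist_triangle_right _ _ _
    _ ≤ 2 * Q := by
        linarith [dist_inducedNearAction_le_of_mem_closedBall hinv hf hg hrp hN hz hγz,
          dist_inducedNearAction_le_of_mem_closedBall hinv hf hg hrp hN hz' hγz']

end InducedNearAction

theorem stmt11_general {G X : Type*} [Group G] [MetricSpace G] [MetricSpace X]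
    (hinv : ∀ γ g₁ g₂ : G, dist (γ * g₁) (γ * g₂) = dist g₁ g₂)
    (hproperG : ∀ (g : G) (r : ℝ), (closedBall g r).Finite)
    (f : G → X) (hf : IsCoarseEquivPair dist dist f) :
    ∃ (tm tp : ℝ → ℝ) (C' : ℝ) (ψ : G → X → X),
      IsCoarseNearAction tm tp C' ψ ∧ IsProperNearAction ψ ∧
        IsCoboundedNearAction ψ := by
  obtain ⟨⟨rm, rp, hρ, hf⟩, C, hC, hg⟩ := hf
  choose g hg using hg
  obtain ⟨N, hNmono, hN0, hN⟩ := exists_monotone_le_of_tendsto_atTop hρ.2.2.2.2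
  obtain ⟨I, hImono, hI0, hItop, hI⟩ :=
    exists_tendsto_atTop_le_of_monotoneOn (ρ := fun d => rp d + 2 * C)
      fun a ha b hb hab => add_le_add_left (hρ.2.1 ha hb hab) _
  refine ⟨rm ∘ I, rp ∘ fun t => N (t + 2 * C), max C (rp (N C)), inducedNearAction f g,
    ⟨hρ.comp hImono hI0 hItop (hNmono.comp (monotone_id.add_const _)) (fun _ => hN0 _),
      hC.trans (le_max_left _ _), isCNearAction_inducedNearAction hinv hf hg hρ.2.1 hN,
      isCoarseEmbeddingWith_inducedNearAction hinv hf hg hρ.1 hρ.2.1 hN hI0 hI⟩,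
    isProperNearAction_inducedNearAction hinv (hproperG 1) hf hg hρ.2.1 hN,
    isCoboundedNearAction_inducedNearAction hinv hf hg hρ.2.1 hN⟩

/-- If a metric space `X` is coarsely equivalent to a countable group `G` carrying a
proper left-invariant metric, then `X` admits a proper cobounded coarse near-action
by `G`. -/
theorem stmt11 {G X : Type*} [Group G] [Countable G] [MetricSpace G] [MetricSpace X]
    (hinv : ∀ γ g₁ g₂ : G, dist (γ * g₁) (γ * g₂) = dist g₁ g₂)
    (hproperG : ∀ (g : G) (r : ℝ), (closedBall g r).Finite)
    (f : G → X) (hf : IsCoarseEquivPair dist dist f) :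
    ∃ (tm tp : ℝ → ℝ) (C' : ℝ) (ψ : G → X → X),
      IsCoarseNearAction tm tp C' ψ ∧ IsProperNearAction ψ ∧
        IsCoboundedNearAction ψ :=
  stmt11_general hinv hproperG f hf
end

section
/- A quasi-geodesic metric space (X,d) admits a proper, cobounded quasi-action by a group G if and only if G is finitely generated and quasi-isometric to X (i.e. there are a finite symmetric generating set S of G and a quasi-isometry f : (G,d_S) → (X,d)). -/
open Metric Filter

/-- `X` is a quasi-geodesic metric space. -/
def IsQuasiGeodesicSpace (X : Type*) [MetricSpace X] : Prop :=
  ∃ L A : ℝ, 1 ≤ L ∧ 0 ≤ A ∧ ∀ x y : X, ∃ (T : ℝ) (c : ℝ → X), 0 ≤ T ∧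
    c 0 = x ∧ c T = y ∧ ∀ s ∈ Set.Icc (0 : ℝ) T, ∀ t ∈ Set.Icc (0 : ℝ) T,
      (1 / L) * |s - t| - A ≤ dist (c s) (c t) ∧ dist (c s) (c t) ≤ L * |s - t| + A

/-- A quasi-action of `G` on `X`: a `C`-near-action by uniform `(K,ε)`-quasi-isometric
embeddings. -/
def IsQuasiAction {G X : Type*} [Group G] [MetricSpace X] (ψ : G → X → X) : Prop :=
  ∃ K ε C : ℝ, 1 ≤ K ∧ 0 ≤ ε ∧ 0 ≤ C ∧ IsCNearAction C ψ ∧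
    ∀ (γ : G) (x₁ x₂ : X),
      (1 / K) * dist x₁ x₂ - ε ≤ dist (ψ γ x₁) (ψ γ x₂) ∧
        dist (ψ γ x₁) (ψ γ x₂) ≤ K * dist x₁ x₂ + ε

/-- The quasi-action `ψ` is cobounded. -/
def IsCoboundedQA {G X : Type*} [Group G] [MetricSpace X] (ψ : G → X → X) : Prop :=
  ∃ (x₀ : X) (R : ℝ), 0 < R ∧ ∀ y : X, ∃ γ : G, dist (ψ γ x₀) y < R

/-- The quasi-action `ψ` is proper. -/
def IsProperQA {G X : Type*} [Group G] [MetricSpace X] (ψ : G → X → X) : Prop :=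
  ∀ R : ℝ, 0 < R → ∃ M : ℕ, ∀ x y : X,
    {γ : G | ∃ z ∈ closedBall x R, ψ γ z ∈ closedBall y R}.encard ≤ (M : ℕ∞)

/-- A quasi-isometry from `(A, dA)` to `(B, dB)`. -/
def IsQuasiIsometryPair {A B : Type*} (dA : A → A → ℝ) (dB : B → B → ℝ)
    (f : A → B) : Prop :=
  ∃ K ε C : ℝ, 1 ≤ K ∧ 0 ≤ ε ∧ 0 ≤ C ∧
    (∀ a₁ a₂ : A, (1 / K) * dA a₁ a₂ - ε ≤ dB (f a₁) (f a₂) ∧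
      dB (f a₁) (f a₂) ≤ K * dA a₁ a₂ + ε) ∧
    ∀ b : B, ∃ a : A, dB b (f a) ≤ C

/-! Švarc–Milnor: cut a quasi-geodesic from `x₀` to `γ • x₀` into `O(d(x₀, γ • x₀))` short
pieces and shadow the breakpoints by orbit points, which coboundedness provides. Consecutive
shadows differ by elements moving `x₀` a bounded distance, so these elements generate `G` with word
length linear in `d(x₀, γ • x₀)`; properness makes them finitely many, and the orbit map is a
quasi-isometry.

Conversely, given a quasi-isometry `f` with quasi-inverse `g₀`, conjugating left multiplication on
`(G, d_S)` by `f` gives the quasi-action `γ • x = f (γ * g₀ x)`; left multiplication is isometric,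
proper and transitive, and each property survives the conjugation up to bounded error. -/

section WordMetric

variable {G : Type*} [Group G] {S : Set G}

lemma wordDist_nonneg (g h : G) : 0 ≤ wordDist S g h := Nat.cast_nonneg _

lemma wordDist_le_length {g h : G} {l : List G} (hl : ∀ x ∈ l, x ∈ S) (hp : l.prod = g⁻¹ * h) :
    wordDist S g h ≤ l.length := by
  unfold wordDist
  exact Nat.cast_le.mpr (Nat.sInf_le ⟨l, rfl, hl, hp⟩)

lemma exists_list_length_eq_wordDist (hS : Submonoid.closure S = ⊤) (g h : G) :
    ∃ l : List G, (∀ x ∈ l, x ∈ S) ∧ l.prod = g⁻¹ * h ∧ (l.length : ℝ) = wordDist S g h := by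
  obtain ⟨l, hl, hp⟩ := Submonoid.exists_list_of_mem_closure (hS ▸ Submonoid.mem_top (g⁻¹ * h))
  have hne : {n : ℕ | ∃ l : List G, l.length = n ∧ (∀ x ∈ l, x ∈ S) ∧ l.prod = g⁻¹ * h}.Nonempty :=
    ⟨l.length, l, rfl, hl, hp⟩
  obtain ⟨l', hlen, hl', hp'⟩ := Nat.sInf_mem hne
  exact ⟨l', hl', hp', by rw [hlen]; rfl⟩

lemma wordDist_mul_left (k g h : G) : wordDist S (k * g) (k * h) = wordDist S g h := by
  simp only [wordDist, mul_inv_rev, mul_assoc, inv_mul_cancel_left]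

lemma wordDist_one_left (g h : G) : wordDist S 1 (g⁻¹ * h) = wordDist S g h := by
  simp only [wordDist, inv_one, one_mul]

lemma wordDist_triangle (hS : Submonoid.closure S = ⊤) (a b c : G) :
    wordDist S a c ≤ wordDist S a b + wordDist S b c := by
  obtain ⟨l₁, hl₁, hp₁, hlen₁⟩ := exists_list_length_eq_wordDist hS a b
  obtain ⟨l₂, hl₂, hp₂, hlen₂⟩ := exists_list_length_eq_wordDist hS b c
  rw [← hlen₁, ← hlen₂]
  have h := wordDist_le_length (S := S) (g := a) (h := c) (l := l₁ ++ l₂)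
    (fun x hx => (List.mem_append.mp hx).elim (hl₁ x) (hl₂ x))
    (by rw [List.prod_append, hp₁, hp₂]; group)
  simpa using h

lemma finite_setOf_wordDist_le (hSfin : S.Finite) (hS : Submonoid.closure S = ⊤) (r : ℝ) :
    {g : G | wordDist S 1 g ≤ r}.Finite := by
  have := hSfin.to_subtype
  refine ((List.finite_length_le S ⌊r⌋₊).image fun l => (l.map (↑)).prod).subset ?_
  intro g hg
  obtain ⟨l, hl, hp, hlen⟩ := exists_list_length_eq_wordDist hS 1 g
  lift l to List S using hl
  refine ⟨l, ?_, by simpa using hp⟩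
  rw [List.length_map] at hlen
  exact Nat.le_floor (hlen ▸ hg)

lemma encard_setOf_wordDist_mul_le (a b : G) (r : ℝ) :
    {γ : G | wordDist S (γ * a) b ≤ r}.encard ≤ {g : G | wordDist S 1 g ≤ r}.encard := by
  refine Set.encard_le_encard_of_injOn (f := fun γ => (γ * a)⁻¹ * b) ?_ ?_
  · intro γ hγ
    simpa only [Set.mem_ofPred_eq, wordDist_one_left] using hγ
  · intro γ₁ _ γ₂ _ h
    simpa using h

lemma submonoid_closure_eq_top_of_inv_mem (hsymm : ∀ s ∈ S, s⁻¹ ∈ S)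
    (hcl : Subgroup.closure S = ⊤) : Submonoid.closure S = ⊤ := by
  have hinv : S⁻¹ ⊆ S := fun s hs => inv_inv s ▸ hsymm _ hs
  rw [← Set.union_eq_self_of_subset_right hinv, ← Subgroup.closure_toSubmonoid, hcl]
  rfl

lemma dist_le_mul_wordDist {X : Type*} [PseudoMetricSpace X] (hS : Submonoid.closure S = ⊤)
    {F : G → X} {B : ℝ} (hF : ∀ g, ∀ s ∈ S, dist (F g) (F (g * s)) ≤ B) (g h : G) :
    dist (F g) (F h) ≤ B * wordDist S g h := by
  obtain ⟨l, hl, hp, hlen⟩ := exists_list_length_eq_wordDist hS g h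
  rw [← hlen, show h = g * l.prod by rw [hp, mul_inv_cancel_left]]
  clear hp hlen
  induction l generalizing g with
  | nil => simp
  | cons s l ih =>
    have hs := hF g s (hl s List.mem_cons_self)
    have ih' := ih (g * s) fun x hx => hl x (List.mem_cons_of_mem s hx)
    calc dist (F g) (F (g * (s :: l).prod))
        ≤ dist (F g) (F (g * s)) + dist (F (g * s)) (F (g * s * l.prod)) := by
          rw [List.prod_cons, ← mul_assoc]; exact dist_triangle _ _ _
      _ ≤ B * (s :: l).length := by push_cast [List.length_cons]; linarith

end WordMetric

lemma exists_coarse_constants (a₁ b₁ a₂ b₂ : ℝ) :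
    ∃ K ε : ℝ, 1 ≤ K ∧ 0 ≤ ε ∧ ∀ u v : ℝ, 0 ≤ u → 0 ≤ v →
      (v ≤ a₁ * u + b₁ → v ≤ K * u + ε) ∧ (u ≤ a₂ * v + b₂ → 1 / K * u - ε ≤ v) := by
  set K := max (max a₁ a₂) 1
  set ε := max (max b₁ b₂) 0
  have hK : 1 ≤ K := le_max_right _ _
  have hε : 0 ≤ ε := le_max_right _ _
  refine ⟨K, ε, hK, hε, fun u v hu hv => ⟨fun h => ?_, fun h => ?_⟩⟩
  · have ha : a₁ ≤ K := (le_max_left _ _).trans (le_max_left _ _)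
    have hb : b₁ ≤ ε := (le_max_left _ _).trans (le_max_left _ _)
    nlinarith
  · have ha : a₂ ≤ K := (le_max_right _ _).trans (le_max_left _ _)
    have hb : b₂ ≤ ε := (le_max_right _ _).trans (le_max_left _ _)
    rw [one_div_mul_eq_div, sub_le_iff_le_add, div_le_iff₀ (by linarith)]
    nlinarith

lemma le_mul_add_of_one_div_mul_sub_le {K ε u v : ℝ} (hK : 0 < K) (h : 1 / K * u - ε ≤ v) :
    u ≤ K * v + K * ε := by
  rw [one_div_mul_eq_div, sub_le_iff_le_add, div_le_iff₀ hK] at h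
  linarith

lemma IsQuasiIsometryPair.of_bounds {A B : Type*} {dA : A → A → ℝ} {dB : B → B → ℝ} {f : A → B}
    {k₁ e₁ k₂ e₂ c : ℝ} (hA : ∀ a₁ a₂, 0 ≤ dA a₁ a₂) (hB : ∀ b₁ b₂, 0 ≤ dB b₁ b₂)
    (hup : ∀ a₁ a₂, dB (f a₁) (f a₂) ≤ k₁ * dA a₁ a₂ + e₁)
    (hlow : ∀ a₁ a₂, dA a₁ a₂ ≤ k₂ * dB (f a₁) (f a₂) + e₂)
    (hco : ∀ b, ∃ a, dB b (f a) ≤ c) : IsQuasiIsometryPair dA dB f := by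
  obtain ⟨K, ε, hK, hε, hKε⟩ := exists_coarse_constants k₁ e₁ k₂ e₂
  refine ⟨K, ε, max c 0, hK, hε, le_max_right _ _, fun x y => ?_, fun b => ?_⟩
  · have h := hKε _ _ (hA x y) (hB (f x) (f y))
    exact ⟨h.2 (hlow x y), h.1 (hup x y)⟩
  · obtain ⟨a, ha⟩ := hco b
    exact ⟨a, ha.trans (le_max_left _ _)⟩

lemma IsQuasiAction.of_bounds {G X : Type*} [Group G] [MetricSpace X] {ψ : G → X → X}
    {C k₁ e₁ k₂ e₂ : ℝ} (hC : 0 ≤ C) (hψ : IsCNearAction C ψ)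
    (hup : ∀ γ x₁ x₂, dist (ψ γ x₁) (ψ γ x₂) ≤ k₁ * dist x₁ x₂ + e₁)
    (hlow : ∀ γ x₁ x₂, dist x₁ x₂ ≤ k₂ * dist (ψ γ x₁) (ψ γ x₂) + e₂) : IsQuasiAction ψ := by
  obtain ⟨K, ε, hK, hε, hKε⟩ := exists_coarse_constants k₁ e₁ k₂ e₂
  refine ⟨K, ε, C, hK, hε, hC, hψ, fun γ x y => ?_⟩
  have h := hKε _ _ (dist_nonneg (x := x) (y := y)) (dist_nonneg (x := ψ γ x) (y := ψ γ y))
  exact ⟨h.2 (hlow γ x y), h.1 (hup γ x y)⟩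

theorem IsQuasiGeodesicSpace.exists_chain {X : Type*} [MetricSpace X]
    (hX : IsQuasiGeodesicSpace X) :
    ∃ r a b : ℝ, 0 ≤ r ∧ 0 ≤ a ∧ ∀ x y : X, ∃ (n : ℕ) (p : ℕ → X), p 0 = x ∧ p n = y ∧
      (n : ℝ) ≤ a * dist x y + b ∧ ∀ i < n, dist (p i) (p (i + 1)) ≤ r := by
  obtain ⟨L, A, hL, hA, hgeo⟩ := hX
  refine ⟨L + A, L, L * A + 1, by linarith, by linarith, fun x y => ?_⟩
  obtain ⟨T, c, hT, rfl, rfl, hc⟩ := hgeo x y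
  obtain ⟨hend, -⟩ := hc 0 (Set.left_mem_Icc.mpr hT) T (Set.right_mem_Icc.mpr hT)
  rw [zero_sub, abs_neg, abs_of_nonneg hT] at hend
  set n := ⌊T⌋₊ + 1
  have hn : (0 : ℝ) < n := by positivity
  have hTn : T < n := by simpa [n] using Nat.lt_floor_add_one T
  have hmem {i : ℕ} (hi : i ≤ n) : (i : ℝ) * T / n ∈ Set.Icc 0 T := by
    refine ⟨by positivity, ?_⟩
    rw [div_le_iff₀ hn]
    have : (i : ℝ) ≤ n := by exact_mod_cast hi
    nlinarith
  refine ⟨n, fun i => c (i * T / n), by simp, ?_, ?_, fun i hi => ?_⟩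
  · change c (n * T / n) = c T
    rw [mul_div_cancel_left₀ T hn.ne']
  · have hT' : T ≤ L * (dist (c 0) (c T) + A) := by
      rw [one_div_mul_eq_div, sub_le_iff_le_add, div_le_iff₀ (by linarith)] at hend
      linarith
    have : (n : ℝ) ≤ T + 1 := by simpa [n] using Nat.floor_le hT
    linarith
  · have hstep := (hc _ (hmem hi.le) _ (hmem hi)).2
    have hdiff : |(i : ℝ) * T / n - ((i + 1 : ℕ) : ℝ) * T / n| = T / n := by
      rw [abs_sub_comm, show ((i + 1 : ℕ) : ℝ) * T / n - i * T / n = T / n by push_cast; ring,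
        abs_of_nonneg (by positivity)]
    have hTn' : T / n ≤ 1 := (div_le_one hn).mpr hTn.le
    rw [hdiff] at hstep
    nlinarith

lemma exists_list_prod_eq_of_chain {G X : Type*} [Group G] [PseudoMetricSpace X] {F : G → X}
    {ρ r : ℝ} (hr : 0 ≤ r) (hF : ∀ y, ∃ g, dist (F g) y ≤ ρ) {n : ℕ} {p : ℕ → X}
    (h0 : dist (F 1) (p 0) ≤ ρ) (hp : ∀ i < n, dist (p i) (p (i + 1)) ≤ r) {k : ℕ} (hk : k ≤ n)
    {g : G} (hg : dist (F g) (p k) ≤ ρ) :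
    ∃ l : List G, (∀ s ∈ l, ∃ h, dist (F h) (F (h * s)) ≤ 2 * ρ + r) ∧ l.prod = g ∧
      l.length = k + 1 := by
  induction k generalizing g with
  | zero =>
    -- `1` and `g` both lie near `p 0`, so the one-letter word `[g]` is a chain step.
    refine ⟨[g], fun s hs => ⟨1, ?_⟩, by simp, rfl⟩
    rw [List.mem_singleton.mp hs, one_mul]
    linarith [dist_triangle_right (F 1) (F g) (p 0)]
  | succ k ih =>
    obtain ⟨g₁, hg₁⟩ := hF (p k)
    obtain ⟨l, hl, rfl, hlen⟩ := ih (by omega) hg₁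
    refine ⟨l ++ [l.prod⁻¹ * g], fun s hs => ?_, by simp, by simp [hlen]⟩
    rcases List.mem_append.mp hs with hs | hs
    · exact hl s hs
    · refine ⟨l.prod, ?_⟩
      rw [List.mem_singleton.mp hs, mul_inv_cancel_left]
      have := hp k hk
      linarith [dist_triangle4 (F l.prod) (p k) (p (k + 1)) (F g), dist_comm (F g) (p (k + 1))]

section QuasiAction

variable {G X : Type*} [Group G] [MetricSpace X] {ψ : G → X → X} {K ε C : ℝ}

lemma dist_mul_orbit_le (hmul : ∀ γ₁ γ₂ x, dist (ψ (γ₁ * γ₂) x) (ψ γ₁ (ψ γ₂ x)) ≤ C)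
    (hup : ∀ γ x₁ x₂, dist (ψ γ x₁) (ψ γ x₂) ≤ K * dist x₁ x₂ + ε) (γ w : G) (x : X) :
    dist (ψ γ x) (ψ (γ * w) x) ≤ K * dist (ψ w x) x + ε + C := by
  linarith [dist_triangle (ψ γ x) (ψ γ (ψ w x)) (ψ (γ * w) x), hup γ (ψ w x) x,
    dist_comm (ψ γ x) (ψ γ (ψ w x)), hmul γ w x, dist_comm (ψ (γ * w) x) (ψ γ (ψ w x))]

lemma dist_orbit_le_of_dist_mul (hmul : ∀ γ₁ γ₂ x, dist (ψ (γ₁ * γ₂) x) (ψ γ₁ (ψ γ₂ x)) ≤ C)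
    (hK : 0 ≤ K) (hlow : ∀ γ x₁ x₂, dist x₁ x₂ ≤ K * dist (ψ γ x₁) (ψ γ x₂) + ε) (γ w : G)
    (x : X) : dist (ψ w x) x ≤ K * (dist (ψ γ x) (ψ (γ * w) x) + C) + ε := by
  have h : dist (ψ γ (ψ w x)) (ψ γ x) ≤ dist (ψ γ x) (ψ (γ * w) x) + C := by
    linarith [dist_triangle (ψ γ (ψ w x)) (ψ (γ * w) x) (ψ γ x), hmul γ w x,
      dist_comm (ψ (γ * w) x) (ψ γ (ψ w x)), dist_comm (ψ (γ * w) x) (ψ γ x)]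
  linarith [hlow γ (ψ w x) x, mul_le_mul_of_nonneg_left h hK]

lemma exists_list_prod_eq_of_quasiGeodesic {x₀ : X} {R r a b : ℝ} (hr : 0 ≤ r)
    (hchain : ∀ x y : X, ∃ (n : ℕ) (p : ℕ → X), p 0 = x ∧ p n = y ∧
      (n : ℝ) ≤ a * dist x y + b ∧ ∀ i < n, dist (p i) (p (i + 1)) ≤ r)
    (hco : ∀ y, ∃ γ, dist (ψ γ x₀) y ≤ R) (hone : dist (ψ 1 x₀) x₀ ≤ C)
    (hmul : ∀ γ₁ γ₂ x, dist (ψ (γ₁ * γ₂) x) (ψ γ₁ (ψ γ₂ x)) ≤ C)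
    (hK : 0 ≤ K) (hlow : ∀ γ x₁ x₂, dist x₁ x₂ ≤ K * dist (ψ γ x₁) (ψ γ x₂) + ε) (γ : G) :
    ∃ l : List G, (∀ s ∈ l, dist (ψ s x₀) x₀ ≤ K * (2 * (R + C) + r + C) + ε) ∧
      l.prod = γ ∧ (l.length : ℝ) ≤ a * dist x₀ (ψ γ x₀) + b + 1 := by
  obtain ⟨n, p, hp0, hpn, hn, hp⟩ := hchain x₀ (ψ γ x₀)
  have hC : 0 ≤ C := dist_nonneg.trans hone
  have hR : 0 ≤ R := by obtain ⟨_, h⟩ := hco x₀; exact dist_nonneg.trans h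
  obtain ⟨l, hl, hprod, hlen⟩ := exists_list_prod_eq_of_chain (F := fun g => ψ g x₀)
    (ρ := R + C) hr (fun y => (hco y).imp fun _ h => by linarith) (by rw [hp0]; linarith) hp
    le_rfl (by rw [hpn, dist_self]; linarith)
  refine ⟨l, fun s hs => ?_, hprod, by rw [hlen]; push_cast; linarith⟩
  obtain ⟨h, hh⟩ := hl s hs
  linarith [dist_orbit_le_of_dist_mul hmul hK hlow h s x₀,
    mul_le_mul_of_nonneg_left (add_le_add_left hh C) hK]

lemma IsProperQA.finite_setOf_dist_le (hprop : IsProperQA ψ) (x₀ : X) (D : ℝ) :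
    {s : G | dist (ψ s x₀) x₀ ≤ D}.Finite := by
  obtain ⟨M, hM⟩ := hprop (max D 1) (by positivity)
  exact (Set.finite_of_encard_le_coe (hM x₀ x₀)).subset fun s hs =>
    ⟨x₀, mem_closedBall_self (by positivity), mem_closedBall.mpr (hs.trans (le_max_left _ _))⟩

end QuasiAction

theorem exists_isQuasiIsometryPair_of_quasiAction {G X : Type*} [Group G] [MetricSpace X]
    (hX : IsQuasiGeodesicSpace X) {ψ : G → X → X} (hqa : IsQuasiAction ψ)
    (hprop : IsProperQA ψ) (hcb : IsCoboundedQA ψ) :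
    ∃ S : Set G, S.Finite ∧ (∀ s ∈ S, s⁻¹ ∈ S) ∧ Subgroup.closure S = ⊤ ∧
      ∃ f : G → X, IsQuasiIsometryPair (wordDist S) dist f := by
  obtain ⟨K, ε, C, hK, -, -, ⟨hone, hmul⟩, hqi⟩ := hqa
  have hK₀ : 0 < K := by linarith
  have hup γ x₁ x₂ := (hqi γ x₁ x₂).2
  have hlow : ∀ γ x₁ x₂, dist x₁ x₂ ≤ K * dist (ψ γ x₁) (ψ γ x₂) + K * ε := fun γ x₁ x₂ =>
    le_mul_add_of_one_div_mul_sub_le hK₀ (hqi γ x₁ x₂).1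
  obtain ⟨x₀, R, hR, hco⟩ := hcb
  obtain ⟨r, a, b, hr, ha, hchain⟩ := hX.exists_chain
  set D := K * (2 * (R + C) + r + C) + K * ε
  set T := {s : G | dist (ψ s x₀) x₀ ≤ D}
  have hword γ := exists_list_prod_eq_of_quasiGeodesic hr hchain
    (fun y => (hco y).imp fun _ h => h.le) (hone x₀) hmul hK₀.le hlow γ
  have hTfin : T.Finite := hprop.finite_setOf_dist_le x₀ D
  have hS : Submonoid.closure (T ∪ T⁻¹) = ⊤ := by
    refine eq_top_iff.mpr fun γ _ => ?_
    obtain ⟨l, hl, rfl, -⟩ := hword γ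
    exact Submonoid.list_prod_mem _ fun s hs => Submonoid.subset_closure (Or.inl (hl s hs))
  have hstep : ∀ g, ∀ s ∈ T ∪ T⁻¹, dist (ψ g x₀) (ψ (g * s) x₀) ≤ K * D + ε + C := by
    rintro g s (hs | hs)
    · linarith [dist_mul_orbit_le hmul hup g s x₀, mul_le_mul_of_nonneg_left hs hK₀.le]
    · have h := dist_mul_orbit_le hmul hup (g * s) s⁻¹ x₀
      rw [mul_inv_cancel_right, dist_comm] at h
      have hs' : dist (ψ s⁻¹ x₀) x₀ ≤ D := Set.mem_inv.mp hs
      linarith [mul_le_mul_of_nonneg_left hs' hK₀.le]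
  have hlower : ∀ g h : G, wordDist (T ∪ T⁻¹) g h ≤
      a * K * dist (ψ g x₀) (ψ h x₀) + (a * (K * C + K * ε) + b + 1) := by
    intro g h
    obtain ⟨l, hl, hprod, hlen⟩ := hword (g⁻¹ * h)
    have hw := wordDist_le_length (S := T ∪ T⁻¹) (fun s hs => Or.inl (hl s hs)) hprod
    have hd := dist_orbit_le_of_dist_mul hmul hK₀.le hlow g (g⁻¹ * h) x₀
    rw [mul_inv_cancel_left] at hd
    nlinarith [dist_comm x₀ (ψ (g⁻¹ * h) x₀)]
  refine ⟨T ∪ T⁻¹, hTfin.union hTfin.inv, fun s hs => by simpa [or_comm] using hs,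
    Subgroup.closure_eq_top_of_mclosure_eq_top hS, fun γ => ψ γ x₀,
    IsQuasiIsometryPair.of_bounds wordDist_nonneg (fun _ _ => dist_nonneg)
      (fun g h => (dist_le_mul_wordDist hS hstep g h).trans_eq (add_zero _).symm) hlower
      fun y => (hco y).imp fun _ h => by rw [dist_comm]; exact h.le⟩

lemma abs_dist_sub_dist_le_of_dist_le {X : Type*} [PseudoMetricSpace X] {π : X → X} {C : ℝ}
    (hπ : ∀ x, dist x (π x) ≤ C) (x₁ x₂ : X) : |dist x₁ x₂ - dist (π x₁) (π x₂)| ≤ 2 * C := by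
  have h := dist_dist_dist_le x₁ x₂ (π x₁) (π x₂)
  rw [Real.dist_eq] at h
  linarith [hπ x₁, hπ x₂]

section Transport

variable {G X : Type*} [Group G] [MetricSpace X] {S : Set G}

def transportedAction (f : G → X) (g₀ : X → G) (γ : G) (x : X) : X := f (γ * g₀ x)

variable {f : G → X} {g₀ : X → G} {k e C : ℝ}

lemma wordDist_mul_quasiInverse_le (hk : 0 ≤ k)
    (hlow : ∀ a b, wordDist S a b ≤ k * dist (f a) (f b) + e)
    (hg₀ : ∀ x, dist x (f (g₀ x)) ≤ C) (a : G) :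
    wordDist S a (g₀ (f a)) ≤ k * C + e := by
  have := hg₀ (f a)
  have := hlow a (g₀ (f a))
  nlinarith

lemma dist_mul_quasiInverse_le (hk : 0 ≤ k)
    (hup : ∀ a b, dist (f a) (f b) ≤ k * wordDist S a b + e)
    (hlow : ∀ a b, wordDist S a b ≤ k * dist (f a) (f b) + e)
    (hg₀ : ∀ x, dist x (f (g₀ x)) ≤ C) (γ a : G) :
    dist (f (γ * a)) (f (γ * g₀ (f a))) ≤ k * (k * C + e) + e := by
  have h := hup (γ * a) (γ * g₀ (f a))
  rw [wordDist_mul_left] at h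
  have := wordDist_mul_quasiInverse_le hk hlow hg₀ a
  nlinarith

lemma isCNearAction_transportedAction (hk : 0 ≤ k)
    (hup : ∀ a b, dist (f a) (f b) ≤ k * wordDist S a b + e)
    (hlow : ∀ a b, wordDist S a b ≤ k * dist (f a) (f b) + e)
    (hg₀ : ∀ x, dist x (f (g₀ x)) ≤ C) :
    IsCNearAction (max C (k * (k * C + e) + e)) (transportedAction f g₀) := by
  refine ⟨fun x => ?_, fun γ₁ γ₂ x => ?_⟩
  · simpa [transportedAction, dist_comm] using (hg₀ x).trans (le_max_left _ _)
  · simpa only [transportedAction, mul_assoc] using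
      (dist_mul_quasiInverse_le hk hup hlow hg₀ γ₁ (γ₂ * g₀ x)).trans (le_max_right _ _)

lemma dist_transportedAction_le (hk : 0 ≤ k)
    (hup : ∀ a b, dist (f a) (f b) ≤ k * wordDist S a b + e)
    (hlow : ∀ a b, wordDist S a b ≤ k * dist (f a) (f b) + e)
    (hg₀ : ∀ x, dist x (f (g₀ x)) ≤ C) (γ : G) (x₁ x₂ : X) :
    dist (transportedAction f g₀ γ x₁) (transportedAction f g₀ γ x₂) ≤
      k * k * dist x₁ x₂ + (k * (k * 2 * C + e) + e) := by
  have h₁ := hup (γ * g₀ x₁) (γ * g₀ x₂)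
  have h₂ := hlow (g₀ x₁) (g₀ x₂)
  have h₃ := (abs_le.mp (abs_dist_sub_dist_le_of_dist_le hg₀ x₁ x₂)).1
  rw [wordDist_mul_left] at h₁
  simp only [transportedAction]
  nlinarith

lemma dist_le_dist_transportedAction (hk : 0 ≤ k)
    (hup : ∀ a b, dist (f a) (f b) ≤ k * wordDist S a b + e)
    (hlow : ∀ a b, wordDist S a b ≤ k * dist (f a) (f b) + e)
    (hg₀ : ∀ x, dist x (f (g₀ x)) ≤ C) (γ : G) (x₁ x₂ : X) :
    dist x₁ x₂ ≤ k * k * dist (transportedAction f g₀ γ x₁) (transportedAction f g₀ γ x₂) +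
      (k * e + e + 2 * C) := by
  have h₁ := hlow (γ * g₀ x₁) (γ * g₀ x₂)
  have h₂ := hup (g₀ x₁) (g₀ x₂)
  have h₃ := (abs_le.mp (abs_dist_sub_dist_le_of_dist_le hg₀ x₁ x₂)).2
  rw [wordDist_mul_left] at h₁
  simp only [transportedAction]
  nlinarith

lemma isProperQA_transportedAction (hSfin : S.Finite) (hS : Submonoid.closure S = ⊤)
    (hk : 0 ≤ k) (hlow : ∀ a b, wordDist S a b ≤ k * dist (f a) (f b) + e)
    (hg₀ : ∀ x, dist x (f (g₀ x)) ≤ C) : IsProperQA (transportedAction f g₀) := by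
  intro R _
  set r := (k * (R + 2 * C) + e) + (k * (R + C) + e)
  have hball := finite_setOf_wordDist_le hSfin hS r
  refine ⟨hball.toFinset.card, fun x y => ?_⟩
  rw [← hball.encard_eq_coe_toFinset_card]
  refine le_trans (Set.encard_mono ?_) (encard_setOf_wordDist_mul_le (g₀ x) (g₀ y) r)
  rintro γ ⟨z, hz, hγz⟩
  rw [mem_closedBall] at hz hγz
  have hxz : wordDist S (γ * g₀ x) (γ * g₀ z) ≤ k * (R + 2 * C) + e := by
    have h₁ := hlow (g₀ x) (g₀ z)
    have h₂ := (abs_le.mp (abs_dist_sub_dist_le_of_dist_le hg₀ x z)).1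
    rw [wordDist_mul_left]
    nlinarith [dist_comm x z]
  have hzy : wordDist S (γ * g₀ z) (g₀ y) ≤ k * (R + C) + e := by
    have h₁ := hlow (γ * g₀ z) (g₀ y)
    have h₂ := dist_triangle (f (γ * g₀ z)) y (f (g₀ y))
    have h₃ := hg₀ y
    unfold transportedAction at hγz
    nlinarith
  exact (wordDist_triangle hS _ _ _).trans (add_le_add hxz hzy)

lemma isCoboundedQA_transportedAction (hk : 0 ≤ k)
    (hup : ∀ a b, dist (f a) (f b) ≤ k * wordDist S a b + e)
    (hlow : ∀ a b, wordDist S a b ≤ k * dist (f a) (f b) + e)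
    (hg₀ : ∀ x, dist x (f (g₀ x)) ≤ C) : IsCoboundedQA (transportedAction f g₀) := by
  have hbound γ := dist_mul_quasiInverse_le hk hup hlow hg₀ γ 1
  simp only [mul_one] at hbound
  refine ⟨f 1, k * (k * C + e) + e + C + 1, ?_, fun y => ⟨g₀ y, ?_⟩⟩
  · linarith [dist_nonneg.trans (hbound 1), dist_nonneg.trans (hg₀ (f 1))]
  · have h := dist_triangle (f (g₀ y * g₀ (f 1))) (f (g₀ y)) y
    unfold transportedAction
    linarith [hbound (g₀ y), hg₀ y, dist_comm y (f (g₀ y)),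
      dist_comm (f (g₀ y)) (f (g₀ y * g₀ (f 1)))]

end Transport

theorem exists_quasiAction_of_isQuasiIsometryPair {G X : Type*} [Group G] [MetricSpace X]
    {S : Set G} (hSfin : S.Finite) (hsymm : ∀ s ∈ S, s⁻¹ ∈ S) (hcl : Subgroup.closure S = ⊤)
    {f : G → X} (hf : IsQuasiIsometryPair (wordDist S) dist f) :
    ∃ ψ : G → X → X, IsQuasiAction ψ ∧ IsProperQA ψ ∧ IsCoboundedQA ψ := by
  obtain ⟨K, ε, C, hK, hε, hC, hqi, hco⟩ := hf
  have hK₀ : 0 < K := by linarith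
  choose g₀ hg₀ using hco
  have hup : ∀ a b, dist (f a) (f b) ≤ K * wordDist S a b + K * ε := fun a b =>
    (hqi a b).2.trans (by nlinarith)
  have hlow : ∀ a b, wordDist S a b ≤ K * dist (f a) (f b) + K * ε := fun a b =>
    le_mul_add_of_one_div_mul_sub_le hK₀ (hqi a b).1
  exact ⟨transportedAction f g₀,
    IsQuasiAction.of_bounds (le_max_of_le_left hC)
      (isCNearAction_transportedAction hK₀.le hup hlow hg₀)
      (dist_transportedAction_le hK₀.le hup hlow hg₀)
      (dist_le_dist_transportedAction hK₀.le hup hlow hg₀),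
    isProperQA_transportedAction hSfin (submonoid_closure_eq_top_of_inv_mem hsymm hcl) hK₀.le
      hlow hg₀,
    isCoboundedQA_transportedAction hK₀.le hup hlow hg₀⟩

/-- A quasi-geodesic metric space admits a proper cobounded quasi-action by `G`
iff `G` is finitely generated and quasi-isometric to `X`. -/
theorem stmt13 {G X : Type*} [Group G] [MetricSpace X]
    (hX : IsQuasiGeodesicSpace X) :
    (∃ ψ : G → X → X, IsQuasiAction ψ ∧ IsProperQA ψ ∧ IsCoboundedQA ψ) ↔
      ∃ S : Set G, S.Finite ∧ (∀ s ∈ S, s⁻¹ ∈ S) ∧ Subgroup.closure S = ⊤ ∧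
        ∃ f : G → X, IsQuasiIsometryPair (wordDist S) dist f :=
  ⟨fun ⟨_, hqa, hprop, hcb⟩ => exists_isQuasiIsometryPair_of_quasiAction hX hqa hprop hcb,
    fun ⟨_, hSfin, hsymm, hcl, _, hf⟩ =>
      exists_quasiAction_of_isQuasiIsometryPair hSfin hsymm hcl hf⟩
end

section
/- Let (X,d) be a proper metric space (all closed metric balls are compact) which is cocompact (there exist x₀ ∈ X and R > 0 such that for every y ∈ X there is a surjective self-isometry φ of X with d(φ(x₀), y) ≤ R) and contractible. Then X is uniformly contractible: for each R > 0 there exists S > R such that for every x ∈ X the inclusion of the open ball B(x,R) into the open ball B(x,S) is null-homotopic (homotopic, as a map B(x,R) → B(x,S), to a constant map). -/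
open Metric Filter

/-- `X` is cocompact: some orbit of the isometry group is `R`-dense. -/
def IsCocompactSpace (X : Type*) [MetricSpace X] : Prop :=
  ∃ (x₀ : X) (R : ℝ), 0 < R ∧ ∀ y : X, ∃ φ : X → X,
    Isometry φ ∧ Function.Surjective φ ∧ dist (φ x₀) y ≤ R

/-- The inclusion of a smaller open ball into a larger one, as a continuous map. -/
noncomputable def ballInclusion {X : Type*} [MetricSpace X] (x : X) {R S : ℝ}
    (h : R ≤ S) : C(Metric.ball x R, Metric.ball x S) :=
  ⟨fun p => ⟨p.1, Metric.ball_subset_ball h p.2⟩,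
    Continuous.subtype_mk continuous_subtype_val _⟩

/-!
Let `H` contract `X` to a point. By properness, `H` moves the compact ball `closedBall x₀ r`
only inside some bounded ball `ball x₀ S`. Given `x`, cocompactness provides an isometry `e` with
`e x₀` within `R₀` of `x`; conjugating `H` by `e` gives a contraction of `X` that moves
`ball x R ⊆ e '' closedBall x₀ (R + R₀)` only inside `ball x (S + R₀)`, uniformly in `x`.
-/

open Set unitInterval

theorem IsCocompactSpace.exists_isometryEquiv {X : Type*} [MetricSpace X]
    (h : IsCocompactSpace X) :
    ∃ (x₀ : X) (R : ℝ), 0 < R ∧ ∀ y : X, ∃ e : X ≃ᵢ X, dist (e x₀) y ≤ R := by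
  obtain ⟨x₀, R, hR, horb⟩ := h
  refine ⟨x₀, R, hR, fun y => ?_⟩
  obtain ⟨φ, hiso, hsurj, hd⟩ := horb y
  exact ⟨{ Equiv.ofBijective φ ⟨hiso.injective, hsurj⟩ with isometry_toFun := hiso }, hd⟩

namespace ContinuousMap.Homotopy

variable {X : Type*}

def conj [TopologicalSpace X] {y : X} (H : (ContinuousMap.id X).Homotopy (const X y))
    (e : X ≃ₜ X) : (ContinuousMap.id X).Homotopy (const X (e y)) where
  toFun q := e (H (q.1, e.symm q.2))
  continuous_toFun := by fun_prop
  map_zero_left := by simp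
  map_one_left := by simp

theorem exists_mapsTo_ball [PseudoMetricSpace X] [ProperSpace X] {Y : Type*}
    [PseudoMetricSpace Y] {f g : C(X, Y)} (H : f.Homotopy g) (x : X) (y : Y) (r s : ℝ) :
    ∃ S, s < S ∧ ∀ t, MapsTo (fun p => H (t, p)) (closedBall x r) (ball y S) := by
  have hK : IsCompact (H '' (univ ×ˢ closedBall x r)) :=
    (isCompact_univ.prod (isCompact_closedBall x r)).image H.continuous
  obtain ⟨S, hsS, hS⟩ := hK.isBounded.subset_ball_lt s y
  exact ⟨S, hsS, fun t p hp => hS ⟨(t, p), ⟨mem_univ t, hp⟩, rfl⟩⟩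

theorem mapsTo_ball_conj [MetricSpace X] {y : X}
    (H : (ContinuousMap.id X).Homotopy (const X y)) (e : X ≃ᵢ X) {x₀ x : X} {R₀ r S : ℝ}
    (hx : dist (e x₀) x ≤ R₀)
    (hH : ∀ t, MapsTo (fun p => H (t, p)) (closedBall x₀ (r + R₀)) (ball x₀ S)) (t : I) :
    MapsTo (fun p => H.conj e.toHomeomorph (t, p)) (ball x r) (ball x (S + R₀)) := by
  have hx' : dist (e.symm x) x₀ ≤ R₀ := by
    rwa [← e.dist_eq, e.apply_symm_apply, dist_comm]
  have h_symm : MapsTo e.symm (ball x r) (closedBall x₀ (r + R₀)) := fun p hp =>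
    closedBall_subset_closedBall' (by linarith) (ball_subset_closedBall
      (e.symm.isometry.mapsTo_ball x r hp))
  have h_e : MapsTo e (ball x₀ S) (ball x (S + R₀)) := fun p hp =>
    ball_subset_ball' (by linarith) (e.isometry.mapsTo_ball x₀ S hp)
  exact h_e.comp ((hH t).comp h_symm)

end ContinuousMap.Homotopy

theorem ballInclusion_homotopic_const_of_mapsTo {X : Type*} [MetricSpace X] {y : X}
    (H : (ContinuousMap.id X).Homotopy (ContinuousMap.const X y)) {x : X} {R S : ℝ}
    (hR : 0 < R) (hRS : R ≤ S) (hH : ∀ t, MapsTo (fun p => H (t, p)) (ball x R) (ball x S)) :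
    ∃ c : ball x S, (ballInclusion x hRS).Homotopic (ContinuousMap.const _ c) := by
  have hy : y ∈ ball x S := by simpa using hH 1 (mem_ball_self hR)
  refine ⟨⟨y, hy⟩, ⟨
    { toFun := fun q => ⟨H (q.1, q.2), hH q.1 q.2.2⟩
      continuous_toFun := by fun_prop
      map_zero_left := fun p => by ext; simp [ballInclusion]
      map_one_left := fun p => by ext; simp }⟩⟩

/-- A proper, cocompact, contractible metric space is uniformly contractible. -/
theorem stmt15 {X : Type*} [MetricSpace X] [ProperSpace X]
    (hcc : IsCocompactSpace X) (hcontr : ContractibleSpace X) :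
    ∀ R : ℝ, 0 < R → ∃ S : ℝ, ∃ hRS : R < S, ∀ x : X,
      ∃ c : Metric.ball x S,
        (ballInclusion x hRS.le).Homotopic (ContinuousMap.const _ c) := by
  obtain ⟨x₀, R₀, hR₀, horb⟩ := hcc.exists_isometryEquiv
  obtain ⟨y₀, ⟨H⟩⟩ := (contractible_iff_id_nullhomotopic X).mp hcontr
  intro R hR
  obtain ⟨S, hRS, hH⟩ := H.exists_mapsTo_ball x₀ x₀ (R + R₀) R
  refine ⟨S + R₀, by linarith, fun x => ?_⟩
  obtain ⟨e, he⟩ := horb x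
  exact ballInclusion_homotopic_const_of_mapsTo (H.conj e.toHomeomorph) hR _
    (H.mapsTo_ball_conj e he hH)
end

section
/- Let (X,d) be a proper, cocompact metric space. Then X admits a sequence 𝒰₀, 𝒰₁, 𝒰₂, … of open covers such that: each 𝒰ᵢ has finite order (there is kᵢ ∈ ℕ such that no point of X lies in more than kᵢ members of 𝒰ᵢ); each 𝒰ᵢ is uniformly bounded (the diameters of its members have a finite upper bound mesh(𝒰ᵢ)); 𝒰_{i+1} refines 𝒰ᵢ (every member of 𝒰_{i+1} is contained in some member of 𝒰ᵢ); and mesh(𝒰ᵢ) → 0 as i → ∞. In particular X has finite macroscopic dimension, i.e. admits a uniformly bounded open cover of finite order. -/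
/-!
Let `N i` be a maximal `2⁻ⁱ`-separated set; it is `2⁻ⁱ`-dense, so the balls of radius `2 · 2⁻ⁱ`
about its points form an open cover of mesh `≤ 4 · 2⁻ⁱ`, and a ball of level `i + 1` lies in the
level-`i` ball about a net point within `2⁻ⁱ` of its centre. The level-`i` balls through `x` have
`2⁻ⁱ`-separated centres in the closed ball of radius `2 · 2⁻ⁱ` about `x`. By cocompactness every
such ball is contained in an isometric image of one fixed compact ball, whose finite covering
number bounds the size of separated sets in it, hence the order of the cover.
-/

open Metric Filter

open Set
open scoped NNReal

section Nets

variable {X Y : Type*}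

lemma Isometry.closedBall_subset_image_closedBall [PseudoMetricSpace X] [PseudoMetricSpace Y]
    {φ : X → Y} (hφ : Isometry φ) (hφs : Function.Surjective φ) {x₀ : X} {y : Y} {R : ℝ}
    (hy : dist (φ x₀) y ≤ R) (r : ℝ) : closedBall y r ⊆ φ '' closedBall x₀ (R + r) := by
  intro z hz
  obtain ⟨x, rfl⟩ := hφs z
  refine ⟨x, ?_, rfl⟩
  rw [mem_closedBall] at hz ⊢
  rw [← hφ.dist_eq]
  linarith [dist_triangle (φ x) y (φ x₀), dist_comm y (φ x₀)]

namespace Metric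

lemma exists_isSeparated_isCover_univ [PseudoEMetricSpace X] (ε : ℝ≥0) :
    ∃ N : Set X, IsSeparated ε N ∧ IsCover ε univ N := by
  obtain ⟨N, hN⟩ := zorn_subset {N : Set X | IsSeparated ε N} fun c hc hchain =>
    ⟨⋃₀ c, hchain.pairwise_sUnion.2 hc, fun _ => subset_sUnion_of_mem⟩
  refine ⟨N, hN.prop, IsCover.of_maximal_isSeparated ⟨⟨subset_univ N, hN.prop⟩, ?_⟩⟩
  exact fun M hM => hN.le_of_ge hM.2

end Metric

lemma IsCocompactSpace.exists_packingNumber_closedBall_le [MetricSpace X] [ProperSpace X]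
    (hcc : IsCocompactSpace X) {ε : ℝ≥0} (hε : ε ≠ 0) (r : ℝ) :
    ∃ k : ℕ, ∀ x : X, packingNumber ε (closedBall x r) ≤ k := by
  obtain ⟨x₀, R, -, htrans⟩ := hcc
  obtain ⟨N, -, hNfin, hN⟩ := exists_finite_isCover_of_isCompact (half_pos hε.bot_lt).ne'
    (isCompact_closedBall x₀ (R + r))
  refine ⟨hNfin.toFinset.card, fun x => ?_⟩
  obtain ⟨φ, hφ, hφs, hx⟩ := htrans x
  calc packingNumber ε (closedBall x r)
      = packingNumber (2 * (ε / 2)) (closedBall x r) := by rw [mul_div_cancel₀ ε two_ne_zero]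
    _ ≤ externalCoveringNumber (ε / 2) (closedBall x r) :=
      packingNumber_two_mul_le_externalCoveringNumber _ _
    _ ≤ externalCoveringNumber (ε / 2) (φ '' closedBall x₀ (R + r)) :=
      externalCoveringNumber_mono_set (hφ.closedBall_subset_image_closedBall hφs hx r)
    _ ≤ (φ '' N).encard := ((hφ.isCover_image_iff N).2 hN).externalCoveringNumber_le_encard
    _ ≤ N.encard := encard_image_le φ N
    _ = hNfin.toFinset.card := hNfin.encard_eq_coe_toFinset_card

end Nets

section BallCover

variable {X : Type*} [PseudoMetricSpace X]

def ballCover (N : Set X) (ρ : ℝ) : Set (Set X) := (ball · ρ) '' N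

lemma isOpen_of_mem_ballCover {N : Set X} {ρ : ℝ} {V : Set X} (hV : V ∈ ballCover N ρ) :
    IsOpen V := by
  obtain ⟨s, -, rfl⟩ := hV
  exact isOpen_ball

lemma ediam_le_of_mem_ballCover {N : Set X} {ρ : ℝ} {V : Set X} (hV : V ∈ ballCover N ρ) :
    ediam V ≤ ENNReal.ofReal (2 * ρ) := by
  obtain ⟨s, -, rfl⟩ := hV
  refine ediam_le_of_forall_dist_le fun a ha b hb => ?_
  linarith [dist_triangle_right a b s, mem_ball.1 ha, mem_ball.1 hb]

lemma sUnion_ballCover_eq_univ {N : Set X} {ε : ℝ≥0} {ρ : ℝ} (hN : IsCover ε univ N)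
    (hρ : ε < ρ) : ⋃₀ ballCover N ρ = univ := by
  refine eq_univ_of_forall fun x => ?_
  obtain ⟨s, hs, hxs⟩ := isCover_iff_subset_iUnion_closedBall.1 hN (mem_univ x) |> mem_iUnion₂.1
  exact ⟨ball s ρ, mem_image_of_mem _ hs, mem_ball.2 ((mem_closedBall.1 hxs).trans_lt hρ)⟩

lemma exists_superset_of_mem_ballCover {M N : Set X} {δ : ℝ≥0} {ρ σ : ℝ} (hN : IsCover δ univ N)
    (hρσ : ρ + δ ≤ σ) {V : Set X} (hV : V ∈ ballCover M ρ) : ∃ W ∈ ballCover N σ, V ⊆ W := by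
  obtain ⟨s, -, rfl⟩ := hV
  obtain ⟨t, ht, hst⟩ := isCover_iff_subset_iUnion_closedBall.1 hN (mem_univ s) |> mem_iUnion₂.1
  exact ⟨ball t σ, mem_image_of_mem _ ht, ball_subset_ball' (by linarith [mem_closedBall.1 hst])⟩

lemma encard_ballCover_mem_le_packingNumber {N : Set X} {ε : ℝ≥0} (hN : IsSeparated ε N)
    (ρ : ℝ) (x : X) :
    {V | V ∈ ballCover N ρ ∧ x ∈ V}.encard ≤ packingNumber ε (closedBall x ρ) := by
  have hsub : {V | V ∈ ballCover N ρ ∧ x ∈ V} ⊆ (ball · ρ) '' {s | s ∈ N ∧ x ∈ ball s ρ} := by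
    rintro V ⟨⟨s, hs, rfl⟩, hx⟩
    exact ⟨s, ⟨hs, hx⟩, rfl⟩
  refine (encard_le_encard hsub).trans <| (encard_image_le _ _).trans ?_
  refine IsSeparated.encard_le_packingNumber (fun s hs => ?_) (hN.subset fun s hs => hs.1)
  exact mem_closedBall'.2 (mem_ball.1 hs.2).le

end BallCover

/-- A proper cocompact metric space admits a sequence of uniformly bounded, finite
order open covers, each refining the previous, with mesh tending to `0`; in
particular it has finite macroscopic dimension. -/
theorem stmt16 {X : Type*} [MetricSpace X] [ProperSpace X]
    (hcc : IsCocompactSpace X) :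
    (∃ U : ℕ → Set (Set X),
      (∀ i, ∀ V ∈ U i, IsOpen V) ∧
      (∀ i, ⋃₀ U i = Set.univ) ∧
      (∀ i, ∃ k : ℕ, ∀ x : X, {V | V ∈ U i ∧ x ∈ V}.encard ≤ (k : ℕ∞)) ∧
      (∃ m : ℕ → ℝ, Tendsto m atTop (nhds 0) ∧
        ∀ i, ∀ V ∈ U i, EMetric.diam V ≤ ENNReal.ofReal (m i)) ∧
      (∀ i, ∀ V ∈ U (i + 1), ∃ W ∈ U i, V ⊆ W)) ∧
    ∃ V : Set (Set X), (∀ W ∈ V, IsOpen W) ∧ ⋃₀ V = Set.univ ∧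
      (∃ B : ℝ, ∀ W ∈ V, EMetric.diam W ≤ ENNReal.ofReal B) ∧
      ∃ k : ℕ, ∀ x : X, {W | W ∈ V ∧ x ∈ W}.encard ≤ (k : ℕ∞) := by
  set ε : ℕ → ℝ≥0 := fun i => 2⁻¹ ^ i
  have hε : ∀ i, 0 < ε i := fun i => pow_pos (by norm_num) i
  have hhalf : ∀ i, 2 * (ε (i + 1) : ℝ) = ε i := fun i => by
    simp only [ε, pow_succ, NNReal.coe_mul, NNReal.coe_pow, NNReal.coe_inv, NNReal.coe_ofNat]
    ring
  choose N hsep hcov using fun i => exists_isSeparated_isCover_univ (X := X) (ε i)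
  set U := fun i => ballCover (N i) (2 * ε i)
  have hopen : ∀ i, ∀ V ∈ U i, IsOpen V := fun i _ => isOpen_of_mem_ballCover
  have hunion : ∀ i, ⋃₀ U i = univ := fun i =>
    sUnion_ballCover_eq_univ (hcov i) (by linarith [NNReal.coe_pos.2 (hε i)])
  have horder : ∀ i, ∃ k : ℕ, ∀ x : X, {V | V ∈ U i ∧ x ∈ V}.encard ≤ k := fun i =>
    (hcc.exists_packingNumber_closedBall_le (hε i).ne' _).imp fun _ hk x =>
      (encard_ballCover_mem_le_packingNumber (hsep i) _ x).trans (hk x)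
  have hmesh : ∀ i, ∀ V ∈ U i, ediam V ≤ ENNReal.ofReal (4 * ε i) := fun i V hV =>
    (ediam_le_of_mem_ballCover hV).trans_eq (by ring_nf)
  have hrefine : ∀ i, ∀ V ∈ U (i + 1), ∃ W ∈ U i, V ⊆ W := fun i _ =>
    exists_superset_of_mem_ballCover (hcov i) (by linarith [hhalf i])
  have hlim : Tendsto (fun i => 4 * (ε i : ℝ)) atTop (nhds 0) := by
    simpa [ε] using (tendsto_pow_atTop_nhds_zero_of_lt_one (r := (2⁻¹ : ℝ)) (by norm_num)
      (by norm_num)).const_mul 4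
  exact ⟨⟨U, hopen, hunion, horder, ⟨_, hlim, hmesh⟩, hrefine⟩,
    U 0, hopen 0, hunion 0, ⟨_, hmesh 0⟩, horder 0⟩
end

section
/- Let X̄ be a compact metrizable space with a compatible metric d̄, let Z ⊆ X̄ be a closed subset, let X = X̄ ∖ Z, and let d be a metric on X inducing the subspace topology on X and such that (X,d) is proper (all closed d-balls are compact). Assume Z is a Z-set in X̄ (there is a homotopy H : X̄ × [0,1] → X̄ with H₀ = id and H_t(X̄) ⊆ X for all t > 0) and that the compactification is controlled: for every R > 0 and ε > 0 there is a compact set C ⊆ X such that every set A ⊆ X ∖ C with diam_d(A) < R satisfies diam_{d̄}(A) < ε. Then for each z ∈ Z, each neighborhood Ū of z in X̄, and each r > 0, there is a neighborhood V̄ of z in X̄ such that d(V, X ∖ U) ≥ r, where V = V̄ ∖ Z, U = Ū ∖ Z, and d(V, X ∖ U) denotes the infimum of d(v,x) over v ∈ V and x ∈ X ∖ U. -/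
/-!
Fix a compact set `K` outside which `d`-distance `< r` forces `d̄`-distance `< ε`, and thicken
it by `r` to a compact `K'` (cover `K` by finitely many unit `d`-balls and enlarge them).
If `v` lies `d̄`-close to `z` but off `K'`, then any `x` with `d v x < r` is also off `K`,
so the pair `{v, x}` is controlled and `x` stays `d̄`-close to `z`.
-/

open Metric Filter

section DistanceFunction

variable {α : Type*} [TopologicalSpace α] {d : α → α → ℝ}

theorem isOpen_setOf_lt_of_triangle (hd_tri : ∀ a b c, d a c ≤ d a b + d b c)
    (hd_open : ∀ s : Set α, (∀ a ∈ s, ∃ ε : ℝ, 0 < ε ∧ ∀ b, d a b < ε → b ∈ s) → IsOpen s)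
    (a : α) (ρ : ℝ) : IsOpen {b | d a b < ρ} := by
  refine hd_open _ fun b (hb : d a b < ρ) => ⟨ρ - d a b, by linarith, fun c hc => ?_⟩
  show d a c < ρ
  linarith [hd_tri a b c]

theorem IsCompact.exists_isCompact_forall_lt_mem {K : Set α} (hK : IsCompact K)
    (hd_self : ∀ a, d a a = 0) (hd_tri : ∀ a b c, d a c ≤ d a b + d b c)
    (hd_open : ∀ s : Set α, (∀ a ∈ s, ∃ ε : ℝ, 0 < ε ∧ ∀ b, d a b < ε → b ∈ s) → IsOpen s)
    (hd_proper : ∀ (a : α) (r : ℝ), IsCompact {b | d a b ≤ r}) (r : ℝ) :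
    ∃ K' : Set α, IsCompact K' ∧ ∀ x ∈ K, ∀ v, d x v < r → v ∈ K' := by
  have hcover : K ⊆ ⋃ c, {b | d c b < 1} := fun a _ =>
    Set.mem_iUnion.2 ⟨a, show d a a < 1 by simp [hd_self]⟩
  obtain ⟨t, ht⟩ := hK.elim_finite_subcover _
    (fun c => isOpen_setOf_lt_of_triangle hd_tri hd_open c 1) hcover
  refine ⟨⋃ c ∈ t, {b | d c b ≤ 1 + r}, t.isCompact_biUnion fun c _ => hd_proper c _,
    fun x hx v hxv => ?_⟩
  obtain ⟨c, hct, hcx⟩ := Set.mem_iUnion₂.1 (ht hx)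
  have hcx : d c x < 1 := hcx
  exact Set.mem_iUnion₂.2 ⟨c, hct, show d c v ≤ 1 + r by linarith [hd_tri c x v]⟩

end DistanceFunction

theorem dist_lt_of_controlled {α β : Type*} [PseudoMetricSpace β] {d : α → α → ℝ}
    (f : α → β) (hd_self : ∀ a, d a a = 0) (hd_symm : ∀ a b, d a b = d b a)
    {R ε : ℝ} (hR : 0 < R) {K : Set α}
    (hK : ∀ A : Set α, A ∩ K = ∅ → (∀ a ∈ A, ∀ b ∈ A, d a b < R) →
      ∀ a ∈ A, ∀ b ∈ A, dist (f a) (f b) < ε)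
    {a b : α} (ha : a ∉ K) (hb : b ∉ K) (hab : d a b < R) : dist (f a) (f b) < ε := by
  have hdisj : ({a, b} : Set α) ∩ K = ∅ := by
    rw [Set.insert_inter_of_notMem ha, Set.singleton_inter_eq_empty.2 hb]
  refine hK _ hdisj ?_ a (Set.mem_insert _ _) b (Set.mem_insert_of_mem _ rfl)
  rintro a' (rfl | rfl) b' (rfl | rfl) <;> simp_all

theorem stmt17_general {Xbar : Type*} [MetricSpace Xbar]
    (Z : Set Xbar)
    (d : ↥Zᶜ → ↥Zᶜ → ℝ)
    (hd_self : ∀ a, d a a = 0)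
    (hd_symm : ∀ a b, d a b = d b a)
    (hd_tri : ∀ a b c, d a c ≤ d a b + d b c)
    (hd_top : ∀ s : Set ↥Zᶜ,
      IsOpen s ↔ ∀ a ∈ s, ∃ ε : ℝ, 0 < ε ∧ ∀ b : ↥Zᶜ, d a b < ε → b ∈ s)
    (hd_proper : ∀ (a : ↥Zᶜ) (r : ℝ), IsCompact {b : ↥Zᶜ | d a b ≤ r})
    (hcontrolled : ∀ R ε : ℝ, 0 < R → 0 < ε → ∃ K : Set ↥Zᶜ, IsCompact K ∧
      ∀ A : Set ↥Zᶜ, A ∩ K = ∅ → (∀ a ∈ A, ∀ b ∈ A, d a b < R) →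
        ∀ a ∈ A, ∀ b ∈ A, dist (a : Xbar) (b : Xbar) < ε) :
    ∀ z ∈ Z, ∀ U ∈ nhds z, ∀ r : ℝ, 0 < r → ∃ V ∈ nhds z,
      ∀ v : ↥Zᶜ, (v : Xbar) ∈ V → ∀ x : ↥Zᶜ, (x : Xbar) ∉ U → r ≤ d v x := by
  intro z hz U hU r hr
  obtain ⟨ε, hε, hballU⟩ := Metric.mem_nhds_iff.1 hU
  obtain ⟨K, hK, hKctrl⟩ := hcontrolled r (ε / 2) hr (half_pos hε)
  obtain ⟨K', hK', hKK'⟩ := hK.exists_isCompact_forall_lt_mem hd_self hd_tri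
    (fun s => (hd_top s).2) hd_proper r
  have hzK' : z ∉ Subtype.val '' K' := fun ⟨b, _, hbz⟩ => b.2 (hbz ▸ hz)
  refine ⟨ball z (ε / 2) ∩ (Subtype.val '' K')ᶜ,
    inter_mem (ball_mem_nhds z (half_pos hε))
      ((hK'.image continuous_subtype_val).isClosed.isOpen_compl.mem_nhds hzK'),
    fun v ⟨hvz, hvK'⟩ x hxU => ?_⟩
  by_contra! hvx
  have hvK' : v ∉ K' := fun h => hvK' ⟨v, h, rfl⟩
  have hvK : v ∉ K := fun h => hvK' (hKK' v h v (by rw [hd_self]; exact hr))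
  have hxK : x ∉ K := fun h => hvK' (hKK' x h v (by rwa [hd_symm]))
  have hvx' := dist_lt_of_controlled Subtype.val hd_self hd_symm hr hKctrl hvK hxK hvx
  refine hxU (hballU ?_)
  rw [mem_ball] at hvz ⊢
  linarith [dist_triangle_left (x : Xbar) z v]

/-- In a controlled `Z`-compactification, points of the boundary have neighborhoods
whose interior parts are arbitrarily `d`-far from the complement of a given
neighborhood. -/
theorem stmt17 {Xbar : Type*} [MetricSpace Xbar] [CompactSpace Xbar]
    (Z : Set Xbar) (hZclosed : IsClosed Z)
    (d : ↥Zᶜ → ↥Zᶜ → ℝ)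
    (hd_self : ∀ a, d a a = 0)
    (hd_eq : ∀ a b, d a b = 0 → a = b)
    (hd_symm : ∀ a b, d a b = d b a)
    (hd_tri : ∀ a b c, d a c ≤ d a b + d b c)
    (hd_top : ∀ s : Set ↥Zᶜ,
      IsOpen s ↔ ∀ a ∈ s, ∃ ε : ℝ, 0 < ε ∧ ∀ b : ↥Zᶜ, d a b < ε → b ∈ s)
    (hd_proper : ∀ (a : ↥Zᶜ) (r : ℝ), IsCompact {b : ↥Zᶜ | d a b ≤ r})
    (H : ℝ → Xbar → Xbar) (hH_cont : Continuous fun p : ℝ × Xbar => H p.1 p.2)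
    (hH_zero : ∀ x, H 0 x = x)
    (hH_off : ∀ t : ℝ, 0 < t → t ≤ 1 → ∀ x, H t x ∉ Z)
    (hcontrolled : ∀ R ε : ℝ, 0 < R → 0 < ε → ∃ K : Set ↥Zᶜ, IsCompact K ∧
      ∀ A : Set ↥Zᶜ, A ∩ K = ∅ → (∀ a ∈ A, ∀ b ∈ A, d a b < R) →
        ∀ a ∈ A, ∀ b ∈ A, dist (a : Xbar) (b : Xbar) < ε) :
    ∀ z ∈ Z, ∀ U ∈ nhds z, ∀ r : ℝ, 0 < r → ∃ V ∈ nhds z,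
      ∀ v : ↥Zᶜ, (v : Xbar) ∈ V → ∀ x : ↥Zᶜ, (x : Xbar) ∉ U → r ≤ d v x :=
  stmt17_general Z d hd_self hd_symm hd_tri hd_top hd_proper hcontrolled
end
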